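/- arXiv:2205.12821 — 2 statements merged into one kernel-verified Lean document; each statement's English description precedes it below -/
import Mathlib

section
/- Let G be a finite simple graph with total domination number γ_t(G) ≥ 3. If there exists a minimum total dominating set D of G containing three vertices x, y, z such that xy is an edge of G and the distance from z to the set {x,y} is at most 2, then G can be transformed into a graph H with γ_t(H) = γ_t(G) − 1 using at most 2 edge contractions. -/
open SimpleGraph

/-- `D` is a total dominating set of `G`: every vertex has a neighbour in `D`. -/
def IsTotalDomSet {V : Type*} (G : SimpleGraph V) (D : Set V) : Prop :=
  ∀ v : V, ∃ u ∈ D, G.Adj u v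

/-- `x` and `y` are (distinct or not) at distance at most two:
adjacent or joined through a common neighbour. -/
def WithinTwo {V : Type*} (G : SimpleGraph V) (x y : V) : Prop :=
  G.Adj x y ∨ ∃ z, G.Adj x z ∧ G.Adj z y

/-- `x` and `y` are at distance exactly two. -/
def DistTwo {V : Type*} (G : SimpleGraph V) (x y : V) : Prop :=
  x ≠ y ∧ ¬ G.Adj x y ∧ ∃ z, G.Adj x z ∧ G.Adj z y

/-- `D` is a semitotal dominating set of `G`: a dominating set in which every
vertex of `D` has another vertex of `D` within distance two (a witness). -/
def IsSemitotalDomSet {V : Type*} (G : SimpleGraph V) (D : Set V) : Prop :=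
  (∀ v : V, v ∉ D → ∃ u ∈ D, G.Adj u v) ∧
  (∀ x ∈ D, ∃ y ∈ D, y ≠ x ∧ WithinTwo G x y)

/-- The total domination number `γ_t`. -/
noncomputable def totalDomNum {V : Type*} (G : SimpleGraph V) [Fintype V] : ℕ :=
  sInf {n | ∃ D : Set V, IsTotalDomSet G D ∧ D.ncard = n}

/-- The semitotal domination number `γ_{t2}`. -/
noncomputable def semitotalDomNum {V : Type*} (G : SimpleGraph V) [Fintype V] : ℕ :=
  sInf {n | ∃ D : Set V, IsSemitotalDomSet G D ∧ D.ncard = n}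

/-- The graph obtained from `G` by contracting the edge `xy`:
delete `y` and merge it into `x`. -/
def contractEdge {V : Type*} (G : SimpleGraph V) (x y : V) :
    SimpleGraph {v : V // v ≠ y} :=
  SimpleGraph.fromRel (fun a b =>
    G.Adj a.1 b.1 ∨ (a.1 = x ∧ G.Adj y b.1) ∨ (b.1 = x ∧ G.Adj y a.1))

/-- A bundled finite simple graph. -/
structure FGraph : Type 1 where
  V : Type
  fin : Fintype V
  G : SimpleGraph V

attribute [instance] FGraph.fin

noncomputable def FGraph.tdn (A : FGraph) : ℕ := totalDomNum A.G

noncomputable def FGraph.stdn (A : FGraph) : ℕ := semitotalDomNum A.G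

/-- `B` is obtained from `A` by contracting a single edge. -/
def FGraph.Contract (A B : FGraph) : Prop :=
  ∃ x y : A.V, A.G.Adj x y ∧ ∃ e : B.V ≃ {v : A.V // v ≠ y},
    ∀ a b : B.V, B.G.Adj a b ↔ (contractEdge A.G x y).Adj (e a) (e b)

/-- `B` is obtained from `A` by a sequence of `n` edge contractions. -/
inductive ContractStar : ℕ → FGraph → FGraph → Prop
  | refl (A : FGraph) : ContractStar 0 A A
  | step {n : ℕ} {A B C : FGraph} : A.Contract B → ContractStar n B C →
      ContractStar (n + 1) A C

/-- At most `k` edge contractions suffice to decrease the total domination number by one. -/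
def ctTDLe (A : FGraph) (k : ℕ) : Prop :=
  ∃ n ≤ k, ∃ B : FGraph, ContractStar n A B ∧ B.tdn = A.tdn - 1

/-- At most `k` edge contractions suffice to decrease the semitotal domination number by one. -/
def ctSTLe (A : FGraph) (k : ℕ) : Prop :=
  ∃ n ≤ k, ∃ B : FGraph, ContractStar n A B ∧ B.stdn = A.stdn - 1

/-- `ct_{γ_t}`: the minimum number of edge contractions needed to decrease `γ_t` by one. -/
noncomputable def ctTDNum (A : FGraph) : ℕ :=
  sInf {n | ∃ B : FGraph, ContractStar n A B ∧ B.tdn = A.tdn - 1}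

/-- `ct_{γ_{t2}}`: the minimum number of edge contractions needed to decrease `γ_{t2}` by one. -/
noncomputable def ctSTNum (A : FGraph) : ℕ :=
  sInf {n | ∃ B : FGraph, ContractStar n A B ∧ B.stdn = A.stdn - 1}

/-- Disjoint union of two simple graphs. -/
def disjGraphUnion {α β : Type*} (G : SimpleGraph α) (H : SimpleGraph β) :
    SimpleGraph (α ⊕ β) :=
  SimpleGraph.fromRel (fun a b =>
    match a, b with
    | Sum.inl a, Sum.inl b => G.Adj a b
    | Sum.inr a, Sum.inr b => H.Adj a b
    | _, _ => False)

/-!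
A minimum total dominating set `D` that contains a path `a - b - c` survives the contraction of
`ab` as `D \ {a}` (what `a` dominated is now dominated by the merged vertex, and `b` by `c`),
while a single contraction never lowers `γ_t` by more than one: so one contraction suffices.
Such a path exists in `D` when `z` is adjacent to `x`, or `z - w - x` with `w = y` or `w ∈ D`.
Otherwise `w ∉ D`, and contracting `zw` keeps `D` total dominating: either `γ_t` drops at once,
or `D` stays minimum and now contains the path `z - x - y`.
-/

section Contraction

variable {V : Type*} {G : SimpleGraph V} {x y : V}

theorem contractEdge_adj {u v : {v : V // v ≠ y}} :
    (contractEdge G x y).Adj u v ↔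
      u ≠ v ∧ (G.Adj u v ∨ (u.1 = x ∧ G.Adj y v) ∨ (v.1 = x ∧ G.Adj y u)) := by
  rw [contractEdge, fromRel_adj]
  grind [G.adj_comm]

theorem contractEdge_adj_of_adj {u v : {v : V // v ≠ y}} (h : G.Adj u v) :
    (contractEdge G x y).Adj u v :=
  contractEdge_adj.2 ⟨Subtype.coe_ne_coe.1 h.ne, Or.inl h⟩

theorem contractEdge_adj_of_eq_of_adj {u v : {v : V // v ≠ y}} (hu : u.1 = x) (hv : u ≠ v)
    (h : G.Adj y v) : (contractEdge G x y).Adj u v :=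
  contractEdge_adj.2 ⟨hv, Or.inr (Or.inl ⟨hu, h⟩)⟩

theorem ncard_preimage_subtypeVal_ne (D : Set V) :
    ((Subtype.val : {v : V // v ≠ y} → V) ⁻¹' D).ncard = (D \ {y}).ncard := by
  have hpre : (Subtype.val : {v : V // v ≠ y} → V) ⁻¹' D = Subtype.val ⁻¹' (D \ {y}) := by
    ext v
    simp [v.2]
  rw [hpre, Set.ncard_preimage_of_injective_subset_range Subtype.val_injective]
  exact fun v hv => ⟨⟨v, hv.2⟩, rfl⟩

/-- Adding `y` repairs the domination if `y` has a neighbour in the image of `D'`, and adding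
`x` does otherwise. -/
theorem IsTotalDomSet.of_contractEdge (hxy : G.Adj x y) {D' : Set {v : V // v ≠ y}}
    (hD' : IsTotalDomSet (contractEdge G x y) D') :
    ∃ E, IsTotalDomSet G E ∧ E.ncard ≤ D'.ncard + 1 := by
  set S := Subtype.val '' D'
  suffices ∃ w, IsTotalDomSet G (insert w S) by
    obtain ⟨w, hw⟩ := this
    refine ⟨_, hw, (Set.ncard_insert_le w S).trans_eq ?_⟩
    rw [Set.ncard_image_of_injective _ Subtype.val_injective]
  have hdom : ∀ v (hv : v ≠ y), ∃ u ∈ S,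
      G.Adj u v ∨ (u = x ∧ G.Adj y v) ∨ (v = x ∧ G.Adj y u) := by
    intro v hv
    obtain ⟨u, hu, huv⟩ := hD' ⟨v, hv⟩
    exact ⟨u, ⟨u, hu, rfl⟩, (contractEdge_adj.1 huv).2⟩
  by_cases hy : ∃ s ∈ S, G.Adj s y
  · refine ⟨y, fun v => ?_⟩
    by_cases hv : v = y
    · obtain ⟨s, hs, hsy⟩ := hy
      exact ⟨s, Or.inr hs, hv ▸ hsy⟩
    obtain ⟨u, hu, h | ⟨-, h⟩ | ⟨rfl, -⟩⟩ := hdom v hv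
    · exact ⟨u, Or.inr hu, h⟩
    · exact ⟨y, Or.inl rfl, h⟩
    · exact ⟨y, Or.inl rfl, hxy.symm⟩
  · push Not at hy
    refine ⟨x, fun v => ?_⟩
    by_cases hv : v = y
    · exact ⟨x, Or.inl rfl, hv ▸ hxy⟩
    obtain ⟨u, hu, h | ⟨rfl, -⟩ | ⟨-, h⟩⟩ := hdom v hv
    · exact ⟨u, Or.inr hu, h⟩
    · exact absurd hxy (hy u hu)
    · exact absurd h.symm (hy u hu)

theorem IsTotalDomSet.contractEdge_of_notMem {D : Set V} (hD : IsTotalDomSet G D) (hy : y ∉ D) :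
    IsTotalDomSet (contractEdge G x y) (Subtype.val ⁻¹' D) := fun v =>
  let ⟨u, hu, huv⟩ := hD v
  ⟨⟨u, fun h => hy (h ▸ hu)⟩, hu, contractEdge_adj_of_adj huv⟩

theorem IsTotalDomSet.contractEdge_of_mem {D : Set V} (hD : IsTotalDomSet G D) (hxy : G.Adj x y)
    (hx : x ∈ D) {c : V} (hc : c ∈ D) (hcy : c ≠ y) (hcx : G.Adj c x) :
    IsTotalDomSet (contractEdge G x y) (Subtype.val ⁻¹' D) := by
  rintro ⟨v, hv⟩
  obtain ⟨u, hu, huv⟩ := hD v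
  by_cases huy : u = y
  · subst huy
    by_cases hvx : v = x
    · subst hvx
      exact ⟨⟨c, hcy⟩, hc, contractEdge_adj_of_adj hcx⟩
    · exact ⟨⟨x, hxy.ne⟩, hx,
        contractEdge_adj_of_eq_of_adj rfl (Subtype.coe_ne_coe.1 (Ne.symm hvx)) huv⟩
  · exact ⟨⟨u, huy⟩, hu, contractEdge_adj_of_adj huv⟩

end Contraction

section CtTDLe

variable {A B : FGraph} {k m : ℕ}

theorem ctTDLe.mono (h : ctTDLe A k) (hkm : k ≤ m) : ctTDLe A m :=
  let ⟨n, hn, hB⟩ := h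
  ⟨n, hn.trans hkm, hB⟩

theorem ctTDLe_one_of_contract (h : A.Contract B) (hB : B.tdn = A.tdn - 1) : ctTDLe A 1 :=
  ⟨1, le_rfl, B, .step h (.refl B), hB⟩

theorem ctTDLe.of_contract (h : A.Contract B) (hB : B.tdn = A.tdn) (hk : ctTDLe B k) :
    ctTDLe A (k + 1) :=
  let ⟨n, hn, C, hBC, hC⟩ := hk
  ⟨n + 1, Nat.succ_le_succ hn, C, .step h hBC, hB ▸ hC⟩

end CtTDLe

namespace FGraph

noncomputable abbrev contract (A : FGraph) (x y : A.V) : FGraph :=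
  ⟨{v : A.V // v ≠ y}, Fintype.ofFinite _, contractEdge A.G x y⟩

variable {A : FGraph} {D : Set A.V}

theorem tdn_le_ncard (hD : IsTotalDomSet A.G D) : A.tdn ≤ D.ncard :=
  Nat.sInf_le ⟨D, hD, rfl⟩

theorem exists_isTotalDomSet_ncard_eq_tdn (hD : IsTotalDomSet A.G D) :
    ∃ D', IsTotalDomSet A.G D' ∧ D'.ncard = A.tdn :=
  Nat.sInf_mem (s := {n | ∃ D : Set A.V, IsTotalDomSet A.G D ∧ D.ncard = n}) ⟨_, D, hD, rfl⟩

theorem contract_of_adj {x y : A.V} (h : A.G.Adj x y) : A.Contract (A.contract x y) :=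
  ⟨x, y, h, Equiv.refl _, fun _ _ => Iff.rfl⟩

theorem tdn_le_tdn_contract_add_one {x y : A.V} (hxy : A.G.Adj x y)
    {D' : Set (A.contract x y).V} (hD' : IsTotalDomSet (A.contract x y).G D') :
    A.tdn ≤ (A.contract x y).tdn + 1 := by
  obtain ⟨D'', hD'', hcard⟩ := exists_isTotalDomSet_ncard_eq_tdn hD'
  obtain ⟨E, hE, hEcard⟩ := hD''.of_contractEdge hxy
  exact (tdn_le_ncard hE).trans (hcard ▸ hEcard)

theorem tdn_contract_of_path (hD : IsTotalDomSet A.G D) (hcard : D.ncard = A.tdn)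
    {a b c : A.V} (ha : a ∈ D) (hb : b ∈ D) (hc : c ∈ D) (hab : A.G.Adj a b)
    (hbc : A.G.Adj b c) (hac : a ≠ c) :
    (A.contract b a).tdn = A.tdn - 1 := by
  have hD₀ : IsTotalDomSet (A.contract b a).G (Subtype.val ⁻¹' D) :=
    hD.contractEdge_of_mem hab.symm hb hc hac.symm hbc.symm
  have hcard₀ : (Subtype.val ⁻¹' D : Set (A.contract b a).V).ncard = A.tdn - 1 := by
    rw [ncard_preimage_subtypeVal_ne, Set.ncard_sdiff_singleton_of_mem ha, hcard]
  have hle := hcard₀ ▸ tdn_le_ncard hD₀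
  have hge := tdn_le_tdn_contract_add_one hab.symm hD₀
  have hpos : 0 < A.tdn := hcard ▸ (Set.ncard_pos (Set.toFinite D)).2 ⟨a, ha⟩
  omega

theorem ctTDLe_one_of_path (hD : IsTotalDomSet A.G D) (hcard : D.ncard = A.tdn)
    {a b c : A.V} (ha : a ∈ D) (hb : b ∈ D) (hc : c ∈ D) (hab : A.G.Adj a b)
    (hbc : A.G.Adj b c) (hac : a ≠ c) : ctTDLe A 1 :=
  ctTDLe_one_of_contract (contract_of_adj hab.symm)
    (tdn_contract_of_path hD hcard ha hb hc hab hbc hac)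

theorem ctTDLe_two_of_withinTwo (hD : IsTotalDomSet A.G D) (hcard : D.ncard = A.tdn)
    {x y z : A.V} (hx : x ∈ D) (hy : y ∈ D) (hz : z ∈ D) (hxy : A.G.Adj x y)
    (hzx : z ≠ x) (hzy : z ≠ y) (hw : WithinTwo A.G z x) : ctTDLe A 2 := by
  obtain hzx_adj | ⟨w, hzw, hwx⟩ := hw
  · exact (ctTDLe_one_of_path hD hcard hz hx hy hzx_adj hxy hzy).mono one_le_two
  obtain rfl | hwy := eq_or_ne w y
  · exact (ctTDLe_one_of_path hD hcard hz hy hx hzw hwx hzx).mono one_le_two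
  by_cases hwD : w ∈ D
  · exact (ctTDLe_one_of_path hD hcard hwD hx hy hwx hxy hwy).mono one_le_two
  set B := A.contract z w
  have hD₁ : IsTotalDomSet B.G (Subtype.val ⁻¹' D) := hD.contractEdge_of_notMem hwD
  have hcard₁ : (Subtype.val ⁻¹' D : Set B.V).ncard = A.tdn := by
    rw [ncard_preimage_subtypeVal_ne, Set.sdiff_singleton_eq_self hwD, hcard]
  have hle : B.tdn ≤ A.tdn := hcard₁ ▸ tdn_le_ncard hD₁
  have hge : A.tdn ≤ B.tdn + 1 := tdn_le_tdn_contract_add_one hzw hD₁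
  by_cases heq : B.tdn = A.tdn
  · have hzx₁ : B.G.Adj ⟨z, hzw.ne⟩ ⟨x, hwx.ne'⟩ :=
      contractEdge_adj_of_eq_of_adj rfl (Subtype.coe_ne_coe.1 hzx) hwx
    have hxy₁ : B.G.Adj ⟨x, hwx.ne'⟩ ⟨y, hwy.symm⟩ := contractEdge_adj_of_adj hxy
    exact ctTDLe.of_contract (contract_of_adj hzw) heq <|
      ctTDLe_one_of_path hD₁ (hcard₁.trans heq.symm) (show z ∈ D from hz) (show x ∈ D from hx)
        (show y ∈ D from hy) hzx₁ hxy₁ (Subtype.coe_ne_coe.1 hzy)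
  · have hdrop : B.tdn = A.tdn - 1 := by omega
    exact (ctTDLe_one_of_contract (contract_of_adj hzw) hdrop).mono one_le_two

end FGraph

theorem stmt0_general (A : FGraph)
    (hD : ∃ D : Set A.V, IsTotalDomSet A.G D ∧ D.ncard = A.tdn ∧
      ∃ x y z, x ∈ D ∧ y ∈ D ∧ z ∈ D ∧ A.G.Adj x y ∧ z ≠ x ∧ z ≠ y ∧
        (WithinTwo A.G z x ∨ WithinTwo A.G z y)) :
    ctTDLe A 2 := by
  obtain ⟨D, hT, hcard, x, y, z, hx, hy, hz, hxy, hzx, hzy, hw | hw⟩ := hD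
  · exact FGraph.ctTDLe_two_of_withinTwo hT hcard hx hy hz hxy hzx hzy hw
  · exact FGraph.ctTDLe_two_of_withinTwo hT hcard hy hx hz hxy.symm hzy hzx hw

/-- If `γ_t(G) ≥ 3` and some minimum total dominating set `D` contains vertices
`x, y, z` with `xy ∈ E(G)` and `d(z, {x,y}) ≤ 2`, then at most two edge
contractions suffice to decrease the total domination number by one. -/
theorem stmt0 (A : FGraph) (h3 : 3 ≤ A.tdn)
    (hD : ∃ D : Set A.V, IsTotalDomSet A.G D ∧ D.ncard = A.tdn ∧
      ∃ x y z, x ∈ D ∧ y ∈ D ∧ z ∈ D ∧ A.G.Adj x y ∧ z ≠ x ∧ z ≠ y ∧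
        (WithinTwo A.G z x ∨ WithinTwo A.G z y)) :
    ctTDLe A 2 :=
  stmt0_general A hD
end

section
/- Every P_8-free connected finite simple graph G with γ_{t2}(G) ≥ 3 satisfies ct_{γ_{t2}}(G) ≤ 2. -/
open SimpleGraph

set_option linter.unusedVariables false

namespace STProof
variable {V : Type*} {G : SimpleGraph V}

lemma W2.symm {x y : V} (h : WithinTwo G x y) : WithinTwo G y x := by
  rcases h with h | ⟨z, h1, h2⟩
  · exact Or.inl h.symm
  · exact Or.inr ⟨z, h2.symm, h1.symm⟩

lemma contractEdge_adj {x y : V} {a b : {v : V // v ≠ y}} :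
    (contractEdge G x y).Adj a b ↔
      a ≠ b ∧ (G.Adj a.1 b.1 ∨ (a.1 = x ∧ G.Adj y b.1) ∨ (b.1 = x ∧ G.Adj y a.1)) := by
  unfold contractEdge
  rw [SimpleGraph.fromRel_adj]
  constructor
  · rintro ⟨hne, h | h⟩
    · exact ⟨hne, h⟩
    · refine ⟨hne, ?_⟩
      rcases h with h | ⟨h1, h2⟩ | ⟨h1, h2⟩
      · exact Or.inl h.symm
      · exact Or.inr (Or.inr ⟨h1, h2⟩)
      · exact Or.inr (Or.inl ⟨h1, h2⟩)
  · rintro ⟨hne, h⟩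
    exact ⟨hne, Or.inl h⟩

lemma sds_le [Fintype V] {D : Set V} (hD : IsSemitotalDomSet G D) :
    semitotalDomNum G ≤ D.ncard :=
  Nat.sInf_le ⟨D, hD, rfl⟩

lemma exists_min_sds [Fintype V] (h : ∃ D : Set V, IsSemitotalDomSet G D) :
    ∃ D : Set V, IsSemitotalDomSet G D ∧ D.ncard = semitotalDomNum G := by
  have hne : {n | ∃ D : Set V, IsSemitotalDomSet G D ∧ D.ncard = n}.Nonempty := by
    obtain ⟨D, hD⟩ := h
    exact ⟨D.ncard, D, hD, rfl⟩
  obtain ⟨D, hD, hc⟩ := Nat.sInf_mem hne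
  exact ⟨D, hD, hc⟩

lemma lift_sds [Fintype V] {x y : V} (hxy : G.Adj x y)
    {D' : Set {v : V // v ≠ y}} (hD' : IsSemitotalDomSet (contractEdge G x y) D') :
    ∃ D : Set V, IsSemitotalDomSet G D ∧ D.ncard ≤ D'.ncard + 1 := by
  classical
  have hxny : x ≠ y := hxy.ne
  refine ⟨(Subtype.val '' D') ∪ {y}, ⟨?_, ?_⟩, ?_⟩
  · intro v hv
    have hvy : v ≠ y := fun h => hv (Or.inr (by simp [h]))
    have hvim : (⟨v, hvy⟩ : {v : V // v ≠ y}) ∉ D' := by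
      intro h
      exact hv (Or.inl ⟨_, h, rfl⟩)
    obtain ⟨u', hu', hadj⟩ := hD'.1 _ hvim
    rw [contractEdge_adj] at hadj
    rcases hadj.2 with h | ⟨h1, h2⟩ | ⟨h1, h2⟩
    · exact ⟨u'.1, Or.inl ⟨u', hu', rfl⟩, h⟩
    · exact ⟨y, Or.inr rfl, h2⟩
    · exact ⟨y, Or.inr rfl, by rw [show v = x from h1]; exact hxy.symm⟩
  · rintro z (⟨u, hu, rfl⟩ | hz)
    · obtain ⟨w', hw', hwne, hW⟩ := hD'.2 u hu
      have hyD : y ∈ (Subtype.val '' D') ∪ {y} := Or.inr rfl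
      have hwD : w'.1 ∈ (Subtype.val '' D') ∪ {y} := Or.inl ⟨w', hw', rfl⟩
      have hyne : y ≠ u.1 := Ne.symm u.2
      have hwne' : w'.1 ≠ u.1 := fun h => hwne (Subtype.ext h)
      rcases hW with hadj | ⟨c, h1, h2⟩
      · rw [contractEdge_adj] at hadj
        rcases hadj.2 with h | ⟨h1, h2⟩ | ⟨h1, h2⟩
        · exact ⟨w'.1, hwD, hwne', Or.inl h⟩
        · exact ⟨y, hyD, hyne, Or.inl (by rw [h1]; exact hxy)⟩
        · exact ⟨y, hyD, hyne, Or.inl h2.symm⟩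
      · rw [contractEdge_adj] at h1 h2
        rcases h1.2 with ha | ⟨ha1, ha2⟩ | ⟨ha1, ha2⟩
        · rcases h2.2 with hb | ⟨hb1, hb2⟩ | ⟨hb1, hb2⟩
          · exact ⟨w'.1, hwD, hwne', Or.inr ⟨c.1, ha, hb⟩⟩
          · exact ⟨y, hyD, hyne, Or.inr ⟨x, by rw [hb1] at ha; exact ha, hxy⟩⟩
          · exact ⟨y, hyD, hyne, Or.inr ⟨c.1, ha, hb2.symm⟩⟩
        · exact ⟨y, hyD, hyne, Or.inl (by rw [ha1]; exact hxy)⟩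
        · exact ⟨y, hyD, hyne, Or.inl ha2.symm⟩
    · have hz' : z = y := hz
      rw [hz']
      by_cases hx : (⟨x, hxny⟩ : {v : V // v ≠ y}) ∈ D'
      · exact ⟨x, Or.inl ⟨_, hx, rfl⟩, hxny, Or.inl hxy.symm⟩
      · obtain ⟨u', hu', hadj⟩ := hD'.1 _ hx
        rw [contractEdge_adj] at hadj
        have huy : u'.1 ≠ y := u'.2
        have huim : u'.1 ∈ (Subtype.val '' D') ∪ {y} := Or.inl ⟨u', hu', rfl⟩
        rcases hadj.2 with h | ⟨h1, h2⟩ | ⟨h1, h2⟩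
        · exact ⟨u'.1, huim, huy, Or.inr ⟨x, hxy.symm, h.symm⟩⟩
        · exact absurd (show (⟨x, hxny⟩ : {v : V // v ≠ y}) ∈ D' by
            have : u' = ⟨x, hxny⟩ := Subtype.ext h1
            rwa [this] at hu') hx
        · exact ⟨u'.1, huim, huy, Or.inl h2⟩
  · calc (Subtype.val '' D' ∪ {y}).ncard
        ≤ (Subtype.val '' D').ncard + ({y} : Set V).ncard := Set.ncard_union_le _ _
      _ = D'.ncard + 1 := by
          rw [Set.ncard_image_of_injective _ Subtype.val_injective, Set.ncard_singleton]

end STProof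

namespace STProof

lemma master1 (A : FGraph) (h3 : 3 ≤ A.stdn) {S : Set A.V} {p r z : A.V}
    (hS : IsSemitotalDomSet A.G S) (hpr : A.G.Adj p r)
    (hp : p ∈ S) (hr : r ∈ S) (hz : z ∈ S) (hzp : z ≠ p) (hzr : z ≠ r)
    (hzw : WithinTwo A.G z p ∨ WithinTwo A.G z r)
    (hcard : (S \ {r}).ncard + 1 ≤ A.stdn) :
    ctSTLe A 2 := by
  classical
  have hprne : p ≠ r := hpr.ne
  set G1 := contractEdge A.G p r with hG1
  haveI instB : Fintype {v : A.V // v ≠ r} := Subtype.fintype _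
  set B : FGraph := ⟨{v : A.V // v ≠ r}, instB, G1⟩ with hB
  have hAB : A.Contract B := ⟨p, r, hpr, Equiv.refl _, fun a b => Iff.rfl⟩
  -- the merged vertex
  set M : B.V := ⟨p, hprne⟩ with hM
  set D1 : Set B.V := {w | w.1 ∈ S} with hD1
  have hMD : M ∈ D1 := hp
  -- adjacency transfer
  have H1 : ∀ (v w : A.V) (hv : v ≠ r) (hw : w ≠ r), A.G.Adj v w →
      G1.Adj ⟨v, hv⟩ ⟨w, hw⟩ := by
    intro v w hv hw hadj
    exact contractEdge_adj.mpr ⟨fun h => hadj.ne (congrArg Subtype.val h), Or.inl hadj⟩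
  have H2 : ∀ (v : A.V) (hv : v ≠ r) (_ : v ≠ p) (t : A.V), (t = p ∨ t = r) →
      A.G.Adj v t → G1.Adj ⟨v, hv⟩ M := by
    intro v hv hvp t ht hadj
    rcases ht with rfl | rfl
    · exact contractEdge_adj.mpr ⟨fun h => hvp (congrArg Subtype.val h), Or.inl hadj⟩
    · exact contractEdge_adj.mpr ⟨fun h => hvp (congrArg Subtype.val h),
        Or.inr (Or.inr ⟨rfl, hadj.symm⟩)⟩
  -- D1 is a semitotal dominating set of B
  have hSDS : IsSemitotalDomSet B.G D1 := by
    constructor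
    · rintro ⟨v, hv⟩ hvD
      have hvS : v ∉ S := hvD
      have hvp : v ≠ p := fun h => hvD (by rw [hD1]; simp only [Set.mem_setOf_eq]; rw [h]; exact hp)
      obtain ⟨d, hd, hdv⟩ := hS.1 v hvS
      by_cases hdT : d = p ∨ d = r
      · exact ⟨M, hMD, (H2 v hv hvp d hdT hdv.symm).symm⟩
      · push_neg at hdT
        exact ⟨⟨d, hdT.2⟩, hd, H1 d v hdT.2 hv hdv⟩
    · rintro ⟨v, hv⟩ hvD
      have hvS : v ∈ S := hvD
      by_cases hvp : v = p
      · -- the merged vertex: use z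
        have hzr' : z ≠ r := hzr
        have hzD : (⟨z, hzr'⟩ : B.V) ∈ D1 := hz
        have hMeq : (⟨v, hv⟩ : B.V) = M := Subtype.ext hvp
        rw [hMeq]
        have hMne : (⟨z, hzr'⟩ : B.V) ≠ M := fun h => hzp (congrArg Subtype.val h)
        refine ⟨⟨z, hzr'⟩, hzD, hMne, ?_⟩
        have key : WithinTwo G1 ⟨z, hzr'⟩ M := by
          have hW : ∃ t, (t = p ∨ t = r) ∧ WithinTwo A.G z t := by
            rcases hzw with h | h
            · exact ⟨p, Or.inl rfl, h⟩
            · exact ⟨r, Or.inr rfl, h⟩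
          obtain ⟨t, htT, hW⟩ := hW
          rcases hW with hadj | ⟨c, h1, h2⟩
          · exact Or.inl (H2 z hzr' hzp t htT hadj)
          · by_cases hcT : c = p ∨ c = r
            · exact Or.inl (H2 z hzr' hzp c hcT h1)
            · push_neg at hcT
              have hcp : c ≠ p := hcT.1
              exact Or.inr ⟨⟨c, hcT.2⟩, H1 z c hzr' hcT.2 h1, H2 c hcT.2 hcp t htT h2⟩
        exact W2.symm key
      · -- ordinary vertex: map its witness
        obtain ⟨w', hw', hwne, hW⟩ := hS.2 v hvS
        have hMne : M ≠ (⟨v, hv⟩ : B.V) := fun h => hvp (congrArg Subtype.val h).symm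
        rcases hW with hadj | ⟨c, h1, h2⟩
        · by_cases hwT : w' = p ∨ w' = r
          · exact ⟨M, hMD, hMne, Or.inl (H2 v hv hvp w' hwT hadj)⟩
          · push_neg at hwT
            exact ⟨⟨w', hwT.2⟩, hw', fun h => hwne (congrArg Subtype.val h),
              Or.inl (H1 v w' hv hwT.2 hadj)⟩
        · by_cases hcT : c = p ∨ c = r
          · exact ⟨M, hMD, hMne, Or.inl (H2 v hv hvp c hcT h1)⟩
          · push_neg at hcT
            by_cases hwT : w' = p ∨ w' = r
            · exact ⟨M, hMD, hMne,
                Or.inr ⟨⟨c, hcT.2⟩, H1 v c hv hcT.2 h1, H2 c hcT.2 hcT.1 w' hwT h2⟩⟩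
            · push_neg at hwT
              exact ⟨⟨w', hwT.2⟩, hw', fun h => hwne (congrArg Subtype.val h),
                Or.inr ⟨⟨c, hcT.2⟩, H1 v c hv hcT.2 h1, H1 c w' hcT.2 hwT.2 h2⟩⟩
  -- cardinality of D1
  have himg : Subtype.val '' D1 = S \ {r} := by
    ext v
    constructor
    · rintro ⟨⟨w, hwr⟩, hw, rfl⟩
      exact ⟨hw, hwr⟩
    · rintro ⟨hv, hvr⟩
      exact ⟨⟨v, hvr⟩, hv, rfl⟩
  have hcard1 : D1.ncard = (S \ {r}).ncard := by
    rw [← himg, Set.ncard_image_of_injective _ Subtype.val_injective]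
  -- the numerical dance
  have hBle : B.stdn ≤ A.stdn - 1 := by
    have := sds_le (G := B.G) hSDS
    have h1 : B.stdn ≤ D1.ncard := this
    omega
  obtain ⟨EB, hEB, hEBcard⟩ := exists_min_sds (G := B.G) ⟨D1, hSDS⟩
  have hEB' : EB.ncard = B.stdn := hEBcard
  obtain ⟨DA, hDA, hDAcard⟩ := lift_sds (G := A.G) hpr hEB
  have hAle : A.stdn ≤ B.stdn + 1 := by
    have h2 : A.stdn ≤ DA.ncard := sds_le (G := A.G) hDA
    omega
  refine ⟨1, by norm_num, B, ContractStar.step hAB (ContractStar.refl B), by omega⟩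

end STProof

namespace STProof

/-- class of an untouched vertex in the double contraction -/
def cls {V : Type*} {q : V} {R : {v : V // v ≠ q}} (v : V) (h1 : v ≠ q) (h2 : v ≠ R.1) :
    {w : {v : V // v ≠ q} // w ≠ R} :=
  ⟨⟨v, h1⟩, fun h => h2 (congrArg Subtype.val h)⟩

lemma master2 (A : FGraph) (h3 : 3 ≤ A.stdn) {S : Set A.V} {p q r z : A.V}
    (hS : IsSemitotalDomSet A.G S) (hpq : A.G.Adj p q) (hqr : A.G.Adj q r)
    (hpr : p ≠ r) (hp : p ∈ S) (hr : r ∈ S) (hz : z ∈ S)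
    (hzp : z ≠ p) (hzq : z ≠ q) (hzr : z ≠ r)
    (hzw : ∃ t, (t = p ∨ t = q ∨ t = r) ∧ WithinTwo A.G z t)
    (hcard : (S \ {q, r}).ncard + 1 ≤ A.stdn) :
    ctSTLe A 2 := by
  classical
  have hpq' : p ≠ q := hpq.ne
  have hrq : r ≠ q := hqr.ne'
  set G1 := contractEdge A.G p q with hG1def
  haveI instB : Fintype {v : A.V // v ≠ q} := Subtype.fintype _
  set B : FGraph := ⟨{v : A.V // v ≠ q}, instB, G1⟩ with hBdef
  have hAB : A.Contract B := ⟨p, q, hpq, Equiv.refl _, fun a b => Iff.rfl⟩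
  set P : B.V := ⟨p, hpq'⟩ with hPdef
  set R : B.V := ⟨r, hrq⟩ with hRdef
  have hPR : P ≠ R := fun h => hpr (congrArg Subtype.val h)
  have hG1PR : G1.Adj P R := contractEdge_adj.mpr ⟨hPR, Or.inr (Or.inl ⟨rfl, hqr⟩)⟩
  set G2 := contractEdge G1 P R with hG2def
  haveI instC : Fintype {w : B.V // w ≠ R} := Subtype.fintype _
  set C : FGraph := ⟨{w : B.V // w ≠ R}, instC, G2⟩ with hCdef
  have hBC : B.Contract C := ⟨P, R, hG1PR, Equiv.refl _, fun a b => Iff.rfl⟩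
  set M : C.V := ⟨P, hPR⟩ with hMdef
  set D2 : Set C.V := {w | w.1.1 ∈ S} with hD2def
  have hMD : M ∈ D2 := hp
  -- basic coordinates
  have val_ne_q : ∀ a : C.V, a.1.1 ≠ q := fun a => a.1.2
  have val_ne_r : ∀ a : C.V, a.1.1 ≠ r := by
    intro a h
    exact a.2 (Subtype.ext h)
  have ne_of_val_ne : ∀ (a b : C.V), a.1.1 ≠ b.1.1 → a ≠ b :=
    fun a b h hab => h (congrArg (fun t => t.1.1) hab)
  have ne_M_of_ne_p : ∀ (a : C.V), a.1.1 ≠ p → a ≠ M :=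
    fun a h => ne_of_val_ne a M h
  -- adjacency transfer
  have H1 : ∀ a b : C.V, A.G.Adj a.1.1 b.1.1 → G2.Adj a b := by
    intro a b hadj
    refine contractEdge_adj.mpr ⟨ne_of_val_ne a b hadj.ne, Or.inl ?_⟩
    exact contractEdge_adj.mpr ⟨fun h => hadj.ne (congrArg Subtype.val h), Or.inl hadj⟩
  have H2 : ∀ (a : C.V), a.1.1 ≠ p → ∀ t : A.V, (t = p ∨ t = q ∨ t = r) →
      A.G.Adj a.1.1 t → G2.Adj a M := by
    intro a hap t ht hadj
    have hneaM : a ≠ M := ne_M_of_ne_p a hap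
    have hne1 : a.1 ≠ P := fun h => hap (congrArg Subtype.val h)
    rcases ht with rfl | rfl | rfl
    · exact contractEdge_adj.mpr ⟨hneaM, Or.inl
        (contractEdge_adj.mpr ⟨hne1, Or.inl hadj⟩)⟩
    · exact contractEdge_adj.mpr ⟨hneaM, Or.inl
        (contractEdge_adj.mpr ⟨hne1, Or.inr (Or.inr ⟨rfl, hadj.symm⟩)⟩)⟩
    · have hG1aR : G1.Adj a.1 R := by
        refine contractEdge_adj.mpr ⟨?_, Or.inl hadj⟩
        intro h
        exact (val_ne_r a) (congrArg Subtype.val h)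
      exact contractEdge_adj.mpr ⟨hneaM, Or.inr (Or.inr ⟨rfl, hG1aR.symm⟩)⟩
  have hSDS : IsSemitotalDomSet C.G D2 := by
    constructor
    · intro c hcD
      have hvS : c.1.1 ∉ S := hcD
      have hvp : c.1.1 ≠ p := fun h => hcD (show c.1.1 ∈ S by rw [h]; exact hp)
      obtain ⟨d, hd, hdv⟩ := hS.1 c.1.1 hvS
      by_cases hdT : d = p ∨ d = q ∨ d = r
      · exact ⟨M, hMD, (H2 c hvp d hdT hdv.symm).symm⟩
      · push_neg at hdT
        refine ⟨cls d hdT.2.1 hdT.2.2, hd, ?_⟩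
        exact H1 (cls d hdT.2.1 hdT.2.2) c hdv
    · intro c hcD
      have hvS : c.1.1 ∈ S := hcD
      by_cases hvp : c.1.1 = p
      · -- the merged vertex: its witness is z
        have hceq : c = M := Subtype.ext (Subtype.ext hvp)
        rw [hceq]
        have hzC : cls z hzq hzr ∈ D2 := hz
        refine ⟨cls z hzq hzr, hzC, ne_M_of_ne_p _ hzp, ?_⟩
        have key : WithinTwo G2 (cls z hzq hzr) M := by
          obtain ⟨t, htT, hW⟩ := hzw
          rcases hW with hadj | ⟨e, h1, h2⟩
          · exact Or.inl (H2 _ hzp t htT hadj)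
          · by_cases heT : e = p ∨ e = q ∨ e = r
            · exact Or.inl (H2 _ hzp e heT h1)
            · push_neg at heT
              exact Or.inr ⟨cls e heT.2.1 heT.2.2, H1 _ _ h1,
                H2 _ heT.1 t htT h2⟩
        exact W2.symm key
      · obtain ⟨w', hw', hwne, hW⟩ := hS.2 c.1.1 hvS
        have hMne : M ≠ c := fun h => hvp (congrArg (fun t => t.1.1) h).symm
        rcases hW with hadj | ⟨e, h1, h2⟩
        · by_cases hwT : w' = p ∨ w' = q ∨ w' = r
          · exact ⟨M, hMD, hMne, Or.inl (H2 c hvp w' hwT hadj)⟩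
          · push_neg at hwT
            refine ⟨cls w' hwT.2.1 hwT.2.2, hw', ?_, ?_⟩
            · exact ne_of_val_ne _ c hwne
            · exact Or.inl (H1 c _ hadj)
        · by_cases heT : e = p ∨ e = q ∨ e = r
          · exact ⟨M, hMD, hMne, Or.inl (H2 c hvp e heT h1)⟩
          · push_neg at heT
            by_cases hwT : w' = p ∨ w' = q ∨ w' = r
            · exact ⟨M, hMD, hMne, Or.inr ⟨cls e heT.2.1 heT.2.2,
                H1 c _ h1, H2 _ heT.1 w' hwT h2⟩⟩
            · push_neg at hwT
              exact ⟨cls w' hwT.2.1 hwT.2.2, hw', ne_of_val_ne _ c hwne,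
                Or.inr ⟨cls e heT.2.1 heT.2.2, H1 c _ h1, H1 _ _ h2⟩⟩
  -- cardinality
  have himg : (fun (w : C.V) => w.1.1) '' D2 = S \ {q, r} := by
    ext v
    constructor
    · rintro ⟨a, ha, rfl⟩
      exact ⟨ha, by
        simp only [Set.mem_insert_iff, Set.mem_singleton_iff]
        push_neg
        exact ⟨val_ne_q a, val_ne_r a⟩⟩
    · rintro ⟨hv, hv2⟩
      simp only [Set.mem_insert_iff, Set.mem_singleton_iff] at hv2
      push_neg at hv2
      exact ⟨cls v hv2.1 hv2.2, hv, rfl⟩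
  have hcard2 : D2.ncard = (S \ {q, r}).ncard := by
    rw [← himg, Set.ncard_image_of_injective _
      (fun a b h => Subtype.ext (Subtype.ext h))]
  -- the numerical dance
  have hCle : C.stdn ≤ A.stdn - 1 := by
    have h1 : C.stdn ≤ D2.ncard := sds_le (G := C.G) hSDS
    omega
  obtain ⟨EC, hEC, hECcard⟩ := exists_min_sds (G := C.G) ⟨D2, hSDS⟩
  have hEC' : EC.ncard = C.stdn := hECcard
  obtain ⟨DB, hDB, hDBcard⟩ := lift_sds (G := G1) hG1PR hEC
  have hBle : B.stdn ≤ C.stdn + 1 := by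
    have h2 : B.stdn ≤ DB.ncard := sds_le (G := B.G) hDB
    omega
  obtain ⟨EB, hEB, hEBcard⟩ := exists_min_sds (G := B.G) ⟨DB, hDB⟩
  have hEB' : EB.ncard = B.stdn := hEBcard
  obtain ⟨DA, hDA, hDAcard⟩ := lift_sds (G := A.G) hpq hEB
  have hAle : A.stdn ≤ B.stdn + 1 := by
    have h2 : A.stdn ≤ DA.ncard := sds_le (G := A.G) hDA
    omega
  by_cases hB1 : B.stdn = A.stdn - 1
  · exact ⟨1, by norm_num, B, ContractStar.step hAB (ContractStar.refl B), hB1⟩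
  · refine ⟨2, le_refl _, C,
      ContractStar.step hAB (ContractStar.step hBC (ContractStar.refl C)), by omega⟩

end STProof

namespace STProof
variable {V : Type*} {G : SimpleGraph V}

lemma insert_sds {D : Set V} (hD : IsSemitotalDomSet G D) {c d0 : V}
    (hd0 : d0 ∈ D) (hadj : G.Adj c d0) : IsSemitotalDomSet G (insert c D) := by
  constructor
  · intro v hv
    obtain ⟨u, hu, huv⟩ := hD.1 v (fun h => hv (Set.mem_insert_of_mem _ h))
    exact ⟨u, Set.mem_insert_of_mem _ hu, huv⟩
  · rintro x (rfl | hx)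
    · exact ⟨d0, Set.mem_insert_of_mem _ hd0, hadj.ne', Or.inl hadj⟩
    · obtain ⟨w, hw, hwne, hW⟩ := hD.2 x hx
      exact ⟨w, Set.mem_insert_of_mem _ hw, hwne, hW⟩

lemma winA (A : FGraph) (h3 : 3 ≤ A.stdn) {D : Set A.V} {p q r : A.V}
    (hD : IsSemitotalDomSet A.G D) (hDcard : D.ncard = A.stdn)
    (hp : p ∈ D) (hq : q ∈ D) (hr : r ∈ D) (hpq : p ≠ q)
    (hW : WithinTwo A.G p q) (hrp : r ≠ p) (hrq : r ≠ q)
    (hWrp : WithinTwo A.G r p) : ctSTLe A 2 := by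
  classical
  have hfin : D.Finite := Set.toFinite _
  rcases hWrp with hadj | ⟨c, h1, h2⟩
  · -- r ~ p : contract this edge, q is the outside witness
    refine master1 A h3 hD hadj hr hp hq hrq.symm hpq.symm (Or.inr (W2.symm hW)) ?_
    rw [Set.ncard_diff_singleton_of_mem hp, hDcard]
    omega
  · by_cases hcD : c ∈ D
    · -- r ~ c with c ∈ D: contract (r,c), p is outside witness (p ~ c)
      have hpc : p ≠ c := Ne.symm h2.ne
      refine master1 A h3 hD h1 hr hcD hp hrp.symm hpc (Or.inr (Or.inl h2.symm)) ?_
      rw [Set.ncard_diff_singleton_of_mem hcD, hDcard]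
      omega
    · -- c ∉ D : S = insert c D, contract the path p - c - r, witness q
      have hS : IsSemitotalDomSet A.G (insert c D) := insert_sds hD hp h2
      have hqc : q ≠ c := fun h => hcD (h ▸ hq)
      have hdiff : insert c D \ {c, r} = D \ {r} := by
        ext v
        simp only [Set.mem_diff, Set.mem_insert_iff, Set.mem_singleton_iff, not_or]
        constructor
        · rintro ⟨rfl | hv, h2', h3'⟩
          · exact absurd rfl h2'
          · exact ⟨hv, h3'⟩
        · rintro ⟨hv, hvr⟩
          exact ⟨Or.inr hv, ⟨fun h => hcD (h ▸ hv), hvr⟩⟩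
      refine master2 A h3 hS h2.symm h1.symm hrp.symm (Set.mem_insert_of_mem _ hp)
        (Set.mem_insert_of_mem _ hr) (Set.mem_insert_of_mem _ hq)
        hpq.symm hqc hrq.symm ⟨p, Or.inl rfl, W2.symm hW⟩ ?_
      rw [hdiff, Set.ncard_diff_singleton_of_mem hr, hDcard]
      omega

lemma winB (A : FGraph) (h3 : 3 ≤ A.stdn) {D : Set A.V} {p q c r : A.V}
    (hD : IsSemitotalDomSet A.G D) (hDcard : D.ncard = A.stdn)
    (hp : p ∈ D) (hq : q ∈ D) (hr : r ∈ D) (hpq : p ≠ q)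
    (hW : WithinTwo A.G p q)
    (hc1 : A.G.Adj p c) (hc2 : A.G.Adj c q)
    (hrp : r ≠ p) (hrq : r ≠ q)
    (hWrc : WithinTwo A.G r c) : ctSTLe A 2 := by
  classical
  have hfin : D.Finite := Set.toFinite _
  by_cases hcD : c ∈ D
  · exact winA A h3 hD hDcard hp hcD hq hc1.ne (Or.inl hc1) hpq.symm
      hc2.ne' (W2.symm hW)
  · have hS : IsSemitotalDomSet A.G (insert c D) := insert_sds hD hp hc1.symm
    have hrc : r ≠ c := fun h => hcD (h ▸ hr)
    have hdiff : insert c D \ {c, q} = D \ {q} := by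
      ext v
      simp only [Set.mem_diff, Set.mem_insert_iff, Set.mem_singleton_iff, not_or]
      constructor
      · rintro ⟨rfl | hv, h2', h3'⟩
        · exact absurd rfl h2'
        · exact ⟨hv, h3'⟩
      · rintro ⟨hv, hvq⟩
        exact ⟨Or.inr hv, ⟨fun h => hcD (h ▸ hv), hvq⟩⟩
    refine master2 A h3 hS hc1 hc2 hpq (Set.mem_insert_of_mem _ hp)
      (Set.mem_insert_of_mem _ hq) (Set.mem_insert_of_mem _ hr)
      hrp hrc hrq ⟨c, Or.inr (Or.inl rfl), hWrc⟩ ?_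
    rw [hdiff, Set.ncard_diff_singleton_of_mem hq, hDcard]
    omega

lemma winAdjPair (A : FGraph) (h3 : 3 ≤ A.stdn) {D : Set A.V} {x y u z : A.V}
    (hD : IsSemitotalDomSet A.G D) (hDcard : D.ncard = A.stdn)
    (hx : x ∈ D) (hy : y ∈ D) (hxy : A.G.Adj x y)
    (huD : u ∉ D) (hux : A.G.Adj u x)
    (hz : z ∈ D) (hzx : z ≠ x) (hzy : z ≠ y) (hzu : z ≠ u)
    (hWzu : WithinTwo A.G z u) : ctSTLe A 2 := by
  classical
  have hfin : D.Finite := Set.toFinite _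
  have hS : IsSemitotalDomSet A.G (insert u D) := insert_sds hD hx hux
  have huy : u ≠ y := fun h => huD (h ▸ hy)
  have hdiff : insert u D \ {x, y} = insert u (D \ {x, y}) := by
    ext v
    simp only [Set.mem_diff, Set.mem_insert_iff, Set.mem_singleton_iff, not_or]
    constructor
    · rintro ⟨rfl | hv, hne⟩
      · exact Or.inl rfl
      · exact Or.inr ⟨hv, hne⟩
    · rintro (rfl | ⟨hv, hne⟩)
      · exact ⟨Or.inl rfl, ⟨fun h => huD (h ▸ hx), fun h => huD (h ▸ hy)⟩⟩
      · exact ⟨Or.inr hv, hne⟩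
  refine master2 A h3 hS hux hxy (fun h => huD (h ▸ hy)) (Set.mem_insert_iff.mpr (Or.inl rfl))
    (Set.mem_insert_of_mem _ hy) (Set.mem_insert_of_mem _ hz)
    hzu hzx hzy ⟨u, Or.inl rfl, hWzu⟩ ?_
  have hxyD : ({x, y} : Set A.V) ⊆ D := by
    rintro v (rfl | rfl)
    · exact hx
    · exact hy
  have h2 : ({x, y} : Set A.V).ncard = 2 := Set.ncard_pair hxy.ne
  rw [hdiff, Set.ncard_insert_of_notMem (fun h => huD h.1) hfin.diff,
    Set.ncard_diff hxyD, h2, hDcard]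
  omega

end STProof

namespace STProof
variable {V : Type*} {G : SimpleGraph V}

lemma win31 (A : FGraph) (h3 : 3 ≤ A.stdn) {D : Set A.V} {x1 y1 a1 u1 x2 : A.V}
    (hD : IsSemitotalDomSet A.G D) (hDcard : D.ncard = A.stdn)
    (hx1 : x1 ∈ D) (hy1 : y1 ∈ D) (hx2 : x2 ∈ D)
    (hxy1 : x1 ≠ y1) (hx2x1 : x2 ≠ x1) (hx2y1 : x2 ≠ y1)
    (ha1D : a1 ∉ D) (hu1D : u1 ∉ D) (ha1u1 : a1 ≠ u1)
    (ha1x : A.G.Adj x1 a1) (ha1y : A.G.Adj a1 y1) (hu1x : A.G.Adj x1 u1)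
    (hWx2u1 : WithinTwo A.G x2 u1)
    (hcover : ∀ w, A.G.Adj w y1 → (A.G.Adj w x1 ∨ A.G.Adj w a1 ∨ A.G.Adj w u1))
    (hFarY : ∀ r ∈ D, r ≠ x1 → r ≠ y1 → ¬ WithinTwo A.G r y1) :
    ctSTLe A 2 := by
  classical
  have hfin : D.Finite := Set.toFinite _
  set S : Set A.V := insert a1 (insert u1 (D \ {y1})) with hSdef
  have hx1S : x1 ∈ S := Or.inr (Or.inr ⟨hx1, hxy1⟩)
  have ha1S : a1 ∈ S := Or.inl rfl
  have hu1S : u1 ∈ S := Or.inr (Or.inl rfl)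
  have hy1S : y1 ∉ S := by
    rintro (rfl | rfl | ⟨h, hne⟩)
    · exact ha1D hy1
    · exact hu1D hy1
    · exact hne rfl
  have hS : IsSemitotalDomSet A.G S := by
    constructor
    · intro v hv
      by_cases hvy : v = y1
      · exact ⟨a1, ha1S, hvy ▸ ha1y⟩
      · have hvD : v ∉ D := by
          intro h
          exact hv (Or.inr (Or.inr ⟨h, hvy⟩))
        obtain ⟨d, hd, hdv⟩ := hD.1 v hvD
        by_cases hdy : d = y1
        · rcases hcover v (hdy ▸ hdv.symm) with h | h | h
          · exact ⟨x1, hx1S, h.symm⟩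
          · exact ⟨a1, ha1S, h.symm⟩
          · exact ⟨u1, hu1S, h.symm⟩
        · exact ⟨d, Or.inr (Or.inr ⟨hd, hdy⟩), hdv⟩
    · rintro s (rfl | rfl | ⟨hs, hsy⟩)
      · exact ⟨x1, hx1S, ha1x.ne, Or.inl ha1x.symm⟩
      · exact ⟨x1, hx1S, hu1x.ne, Or.inl hu1x.symm⟩
      · by_cases hsx : s = x1
        · exact ⟨a1, ha1S, fun h => ha1D (h ▸ hsx ▸ hs), hsx ▸ Or.inl ha1x⟩
        · obtain ⟨w, hw, hwne, hWsw⟩ := hD.2 s hs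
          have hwy : w ≠ y1 := by
            intro h
            exact hFarY s hs hsx hsy (h ▸ hWsw)
          exact ⟨w, Or.inr (Or.inr ⟨hw, hwy⟩), hwne, hWsw⟩
  have ha1x1 : a1 ≠ x1 := ha1x.ne'
  have hu1x1 : u1 ≠ x1 := hu1x.ne'
  have hdiff : S \ {x1, u1} = insert a1 (D \ {y1, x1}) := by
    ext v
    simp only [hSdef, Set.mem_diff, Set.mem_insert_iff, Set.mem_singleton_iff, not_or]
    constructor
    · rintro ⟨rfl | rfl | ⟨hv, hvy⟩, hne1, hne2⟩
      · exact Or.inl rfl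
      · exact absurd rfl hne2
      · exact Or.inr ⟨hv, hvy, hne1⟩
    · rintro (rfl | ⟨hv, hvy, hvx⟩)
      · exact ⟨Or.inl rfl, ha1x1, ha1u1⟩
      · exact ⟨Or.inr (Or.inr ⟨hv, hvy⟩), hvx, fun h => hu1D (h ▸ hv)⟩
  refine master2 A h3 hS ha1x.symm hu1x ha1u1 ha1S hu1S
    (Or.inr (Or.inr ⟨hx2, hx2y1⟩)) (fun h => ha1D (h ▸ hx2)) hx2x1
    (fun h => hu1D (h ▸ hx2)) ⟨u1, Or.inr (Or.inr rfl), hWx2u1⟩ ?_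
  have h1 : (D \ ({y1, x1} : Set A.V)).ncard = D.ncard - 2 := by
    rw [Set.ncard_diff (by rintro v (rfl | rfl); exacts [hy1, hx1]),
      Set.ncard_pair (Ne.symm hxy1)]
  rw [hdiff, Set.ncard_insert_of_notMem (fun h => ha1D h.1) hfin.diff, h1, hDcard]
  omega

end STProof

namespace STProof

/-- The bad-case context: two distant witness pairs joined by a path of length 3. -/
structure Ctx (A : FGraph) where
  D : Set A.V
  hD : IsSemitotalDomSet A.G D
  hDcard : D.ncard = A.stdn
  x1 : A.V
  y1 : A.V
  a1 : A.V
  u1 : A.V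
  u2 : A.V
  x2 : A.V
  y2 : A.V
  a2 : A.V
  hx1D : x1 ∈ D
  hy1D : y1 ∈ D
  hx2D : x2 ∈ D
  hy2D : y2 ∈ D
  ha1D : a1 ∉ D
  hu1D : u1 ∉ D
  hu2D : u2 ∉ D
  ha2D : a2 ∉ D
  hy1x1 : y1 ≠ x1
  hy2x2 : y2 ≠ x2
  hx2x1 : x2 ≠ x1
  hx2y1 : x2 ≠ y1
  hy2x1 : y2 ≠ x1
  hy2y1 : y2 ≠ y1
  hx1a1 : A.G.Adj x1 a1
  ha1y1 : A.G.Adj a1 y1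
  hx1u1 : A.G.Adj x1 u1
  hu1u2 : A.G.Adj u1 u2
  hu2x2 : A.G.Adj u2 x2
  hx2a2 : A.G.Adj x2 a2
  ha2y2 : A.G.Adj a2 y2
  hn1 : ¬ A.G.Adj x1 y1
  hn2 : ¬ A.G.Adj x2 y2
  hFar1 : ∀ r ∈ D, r ≠ x1 → r ≠ y1 → ¬ WithinTwo A.G r x1 ∧ ¬ WithinTwo A.G r y1
  hFar2 : ∀ r ∈ D, r ≠ x2 → r ≠ y2 → ¬ WithinTwo A.G r x2 ∧ ¬ WithinTwo A.G r y2
  hCN1 : ∀ c, A.G.Adj x1 c → A.G.Adj c y1 → ∀ r ∈ D, r ≠ x1 → r ≠ y1 → ¬ WithinTwo A.G r c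
  hCN2 : ∀ c, A.G.Adj x2 c → A.G.Adj c y2 → ∀ r ∈ D, r ≠ x2 → r ≠ y2 → ¬ WithinTwo A.G r c

namespace Ctx
variable {A : FGraph} (c : Ctx A)

/-- swap the two sides -/
def flip : Ctx A where
  D := c.D
  hD := c.hD
  hDcard := c.hDcard
  x1 := c.x2
  y1 := c.y2
  a1 := c.a2
  u1 := c.u2
  u2 := c.u1
  x2 := c.x1
  y2 := c.y1
  a2 := c.a1
  hx1D := c.hx2D
  hy1D := c.hy2D
  hx2D := c.hx1D
  hy2D := c.hy1D
  ha1D := c.ha2D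
  hu1D := c.hu2D
  hu2D := c.hu1D
  ha2D := c.ha1D
  hy1x1 := c.hy2x2
  hy2x2 := c.hy1x1
  hx2x1 := fun h => c.hx2x1 h.symm
  hx2y1 := fun h => c.hy2x1 h.symm
  hy2x1 := fun h => c.hx2y1 h.symm
  hy2y1 := fun h => c.hy2y1 h.symm
  hx1a1 := c.hx2a2
  ha1y1 := c.ha2y2
  hx1u1 := c.hu2x2.symm
  hu1u2 := c.hu1u2.symm
  hu2x2 := c.hx1u1.symm
  hx2a2 := c.hx1a1
  ha2y2 := c.ha1y1
  hn1 := c.hn2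
  hn2 := c.hn1
  hFar1 := c.hFar2
  hFar2 := c.hFar1
  hCN1 := c.hCN2
  hCN2 := c.hCN1

lemma hW21 : WithinTwo A.G c.x1 c.y1 := Or.inr ⟨c.a1, c.hx1a1, c.ha1y1⟩
lemma hWx2u1 : WithinTwo A.G c.x2 c.u1 := Or.inr ⟨c.u2, c.hu2x2.symm, c.hu1u2.symm⟩
lemma hWx1u2 : WithinTwo A.G c.x1 c.u2 := Or.inr ⟨c.u1, c.hx1u1, c.hu1u2⟩
lemma F_x2x1 : ¬ WithinTwo A.G c.x2 c.x1 := (c.hFar1 c.x2 c.hx2D c.hx2x1 c.hx2y1).1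
lemma F_x2y1 : ¬ WithinTwo A.G c.x2 c.y1 := (c.hFar1 c.x2 c.hx2D c.hx2x1 c.hx2y1).2
lemma F_y2x1 : ¬ WithinTwo A.G c.y2 c.x1 := (c.hFar1 c.y2 c.hy2D c.hy2x1 c.hy2y1).1
lemma F_y2y1 : ¬ WithinTwo A.G c.y2 c.y1 := (c.hFar1 c.y2 c.hy2D c.hy2x1 c.hy2y1).2
lemma F_x1x2 : ¬ WithinTwo A.G c.x1 c.x2 :=
  (c.hFar2 c.x1 c.hx1D (fun h => c.hx2x1 h.symm) (fun h => c.hy2x1 h.symm)).1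
lemma F_x1y2 : ¬ WithinTwo A.G c.x1 c.y2 :=
  (c.hFar2 c.x1 c.hx1D (fun h => c.hx2x1 h.symm) (fun h => c.hy2x1 h.symm)).2
lemma F_y1x2 : ¬ WithinTwo A.G c.y1 c.x2 :=
  (c.hFar2 c.y1 c.hy1D (fun h => c.hx2y1 h.symm) (fun h => c.hy2y1 h.symm)).1
lemma F_y1y2 : ¬ WithinTwo A.G c.y1 c.y2 :=
  (c.hFar2 c.y1 c.hy1D (fun h => c.hx2y1 h.symm) (fun h => c.hy2y1 h.symm)).2
lemma Fa1x2 : ¬ WithinTwo A.G c.x2 c.a1 :=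
  c.hCN1 c.a1 c.hx1a1 c.ha1y1 c.x2 c.hx2D c.hx2x1 c.hx2y1
lemma Fa1y2 : ¬ WithinTwo A.G c.y2 c.a1 :=
  c.hCN1 c.a1 c.hx1a1 c.ha1y1 c.y2 c.hy2D c.hy2x1 c.hy2y1
lemma Fa2x1 : ¬ WithinTwo A.G c.x1 c.a2 :=
  c.hCN2 c.a2 c.hx2a2 c.ha2y2 c.x1 c.hx1D (fun h => c.hx2x1 h.symm) (fun h => c.hy2x1 h.symm)
lemma Fa2y1 : ¬ WithinTwo A.G c.y1 c.a2 :=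
  c.hCN2 c.a2 c.hx2a2 c.ha2y2 c.y1 c.hy1D (fun h => c.hx2y1 h.symm) (fun h => c.hy2y1 h.symm)
-- u1 is not a common neighbour of pair 1
lemma nAdj_u1y1 : ¬ A.G.Adj c.u1 c.y1 := fun h =>
  c.hCN1 c.u1 c.hx1u1 h c.x2 c.hx2D c.hx2x1 c.hx2y1 c.hWx2u1
-- u2 is not a common neighbour of pair 2
lemma nAdj_u2y2 : ¬ A.G.Adj c.u2 c.y2 := fun h =>
  c.hCN2 c.u2 c.hu2x2.symm h c.x1 c.hx1D (fun h' => c.hx2x1 h'.symm)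
    (fun h' => c.hy2x1 h'.symm) c.hWx1u2

end Ctx
end STProof

namespace STProof
variable {V : Type*} {G : SimpleGraph V}
set_option maxHeartbeats 1000000 in
lemma buildP8 (v0 : V) (v1 : V) (v2 : V) (v3 : V) (v4 : V) (v5 : V) (v6 : V) (v7 : V)
    (a01 : G.Adj v0 v1) (a12 : G.Adj v1 v2) (a23 : G.Adj v2 v3) (a34 : G.Adj v3 v4) (a45 : G.Adj v4 v5) (a56 : G.Adj v5 v6) (a67 : G.Adj v6 v7)
    (n02 : ¬ G.Adj v0 v2) (n03 : ¬ G.Adj v0 v3) (n04 : ¬ G.Adj v0 v4) (n05 : ¬ G.Adj v0 v5) (n06 : ¬ G.Adj v0 v6) (n07 : ¬ G.Adj v0 v7) (n13 : ¬ G.Adj v1 v3) (n14 : ¬ G.Adj v1 v4) (n15 : ¬ G.Adj v1 v5) (n16 : ¬ G.Adj v1 v6) (n17 : ¬ G.Adj v1 v7) (n24 : ¬ G.Adj v2 v4) (n25 : ¬ G.Adj v2 v5) (n26 : ¬ G.Adj v2 v6) (n27 : ¬ G.Adj v2 v7) (n35 : ¬ G.Adj v3 v5) (n36 : ¬ G.Adj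 v3 v6) (n37 : ¬ G.Adj v3 v7) (n46 : ¬ G.Adj v4 v6) (n47 : ¬ G.Adj v4 v7) (n57 : ¬ G.Adj v5 v7) :
    Nonempty (SimpleGraph.pathGraph 8 ↪g G) := by
  have d02 : v0 ≠ v2 := fun h => n03 (by rw [h]; exact a23)
  have d03 : v0 ≠ v3 := by
    intro h
    have := a01
    rw [h] at this
    exact n13 this.symm
  have d04 : v0 ≠ v4 := by
    intro h
    have := a01
    rw [h] at this
    exact n14 this.symm
  have d05 : v0 ≠ v5 := by
    intro h
    have := a01
    rw [h] at this
    exact n15 this.symm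
  have d06 : v0 ≠ v6 := by
    intro h
    have := a01
    rw [h] at this
    exact n16 this.symm
  have d07 : v0 ≠ v7 := by
    intro h
    have := a01
    rw [h] at this
    exact n17 this.symm
  have d13 : v1 ≠ v3 := fun h => n14 (by rw [h]; exact a34)
  have d14 : v1 ≠ v4 := by
    intro h
    have := a12
    rw [h] at this
    exact n24 this.symm
  have d15 : v1 ≠ v5 := by
    intro h
    have := a12
    rw [h] at this
    exact n25 this.symm
  have d16 : v1 ≠ v6 := by
    intro h
    have := a12
    rw [h] at this
    exact n26 this.symm
  have d17 : v1 ≠ v7 := by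
    intro h
    have := a12
    rw [h] at this
    exact n27 this.symm
  have d24 : v2 ≠ v4 := fun h => n25 (by rw [h]; exact a45)
  have d25 : v2 ≠ v5 := by
    intro h
    have := a23
    rw [h] at this
    exact n35 this.symm
  have d26 : v2 ≠ v6 := by
    intro h
    have := a23
    rw [h] at this
    exact n36 this.symm
  have d27 : v2 ≠ v7 := by
    intro h
    have := a23
    rw [h] at this
    exact n37 this.symm
  have d35 : v3 ≠ v5 := fun h => n36 (by rw [h]; exact a56)
  have d36 : v3 ≠ v6 := by
    intro h
    have := a34
    rw [h] at this
    exact n46 this.symm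
  have d37 : v3 ≠ v7 := by
    intro h
    have := a34
    rw [h] at this
    exact n47 this.symm
  have d46 : v4 ≠ v6 := fun h => n47 (by rw [h]; exact a67)
  have d47 : v4 ≠ v7 := by
    intro h
    have := a45
    rw [h] at this
    exact n57 this.symm
  have d57 : v5 ≠ v7 := fun h => n47 (by rw [← h]; exact a45)
  have d01 : v0 ≠ v1 := a01.ne
  have d12 : v1 ≠ v2 := a12.ne
  have d23 : v2 ≠ v3 := a23.ne
  have d34 : v3 ≠ v4 := a34.ne
  have d45 : v4 ≠ v5 := a45.ne
  have d56 : v5 ≠ v6 := a56.ne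
  have d67 : v6 ≠ v7 := a67.ne
  have d10 : v1 ≠ v0 := d01.symm
  have d21 : v2 ≠ v1 := d12.symm
  have d32 : v3 ≠ v2 := d23.symm
  have d43 : v4 ≠ v3 := d34.symm
  have d54 : v5 ≠ v4 := d45.symm
  have d65 : v6 ≠ v5 := d56.symm
  have d76 : v7 ≠ v6 := d67.symm
  have d20 : v2 ≠ v0 := d02.symm
  have d30 : v3 ≠ v0 := d03.symm
  have d40 : v4 ≠ v0 := d04.symm
  have d50 : v5 ≠ v0 := d05.symm
  have d60 : v6 ≠ v0 := d06.symm
  have d70 : v7 ≠ v0 := d07.symm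
  have d31 : v3 ≠ v1 := d13.symm
  have d41 : v4 ≠ v1 := d14.symm
  have d51 : v5 ≠ v1 := d15.symm
  have d61 : v6 ≠ v1 := d16.symm
  have d71 : v7 ≠ v1 := d17.symm
  have d42 : v4 ≠ v2 := d24.symm
  have d52 : v5 ≠ v2 := d25.symm
  have d62 : v6 ≠ v2 := d26.symm
  have d72 : v7 ≠ v2 := d27.symm
  have d53 : v5 ≠ v3 := d35.symm
  have d63 : v6 ≠ v3 := d36.symm
  have d73 : v7 ≠ v3 := d37.symm
  have d64 : v6 ≠ v4 := d46.symm
  have d74 : v7 ≠ v4 := d47.symm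
  have d75 : v7 ≠ v5 := d57.symm
  have k00 : G.Adj v0 v0 ↔ (SimpleGraph.pathGraph 8).Adj 0 0 := iff_of_false (G.loopless.irrefl _) (by rw [SimpleGraph.pathGraph_adj]; decide)
  have k01 : G.Adj v0 v1 ↔ (SimpleGraph.pathGraph 8).Adj 0 1 := iff_of_true a01 (by rw [SimpleGraph.pathGraph_adj]; decide)
  have k02 : G.Adj v0 v2 ↔ (SimpleGraph.pathGraph 8).Adj 0 2 := iff_of_false n02 (by rw [SimpleGraph.pathGraph_adj]; decide)
  have k03 : G.Adj v0 v3 ↔ (SimpleGraph.pathGraph 8).Adj 0 3 := iff_of_false n03 (by rw [SimpleGraph.pathGraph_adj]; decide)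
  have k04 : G.Adj v0 v4 ↔ (SimpleGraph.pathGraph 8).Adj 0 4 := iff_of_false n04 (by rw [SimpleGraph.pathGraph_adj]; decide)
  have k05 : G.Adj v0 v5 ↔ (SimpleGraph.pathGraph 8).Adj 0 5 := iff_of_false n05 (by rw [SimpleGraph.pathGraph_adj]; decide)
  have k06 : G.Adj v0 v6 ↔ (SimpleGraph.pathGraph 8).Adj 0 6 := iff_of_false n06 (by rw [SimpleGraph.pathGraph_adj]; decide)
  have k07 : G.Adj v0 v7 ↔ (SimpleGraph.pathGraph 8).Adj 0 7 := iff_of_false n07 (by rw [SimpleGraph.pathGraph_adj]; decide)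
  have k10 : G.Adj v1 v0 ↔ (SimpleGraph.pathGraph 8).Adj 1 0 := iff_of_true a01.symm (by rw [SimpleGraph.pathGraph_adj]; decide)
  have k11 : G.Adj v1 v1 ↔ (SimpleGraph.pathGraph 8).Adj 1 1 := iff_of_false (G.loopless.irrefl _) (by rw [SimpleGraph.pathGraph_adj]; decide)
  have k12 : G.Adj v1 v2 ↔ (SimpleGraph.pathGraph 8).Adj 1 2 := iff_of_true a12 (by rw [SimpleGraph.pathGraph_adj]; decide)
  have k13 : G.Adj v1 v3 ↔ (SimpleGraph.pathGraph 8).Adj 1 3 := iff_of_false n13 (by rw [SimpleGraph.pathGraph_adj]; decide)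
  have k14 : G.Adj v1 v4 ↔ (SimpleGraph.pathGraph 8).Adj 1 4 := iff_of_false n14 (by rw [SimpleGraph.pathGraph_adj]; decide)
  have k15 : G.Adj v1 v5 ↔ (SimpleGraph.pathGraph 8).Adj 1 5 := iff_of_false n15 (by rw [SimpleGraph.pathGraph_adj]; decide)
  have k16 : G.Adj v1 v6 ↔ (SimpleGraph.pathGraph 8).Adj 1 6 := iff_of_false n16 (by rw [SimpleGraph.pathGraph_adj]; decide)
  have k17 : G.Adj v1 v7 ↔ (SimpleGraph.pathGraph 8).Adj 1 7 := iff_of_false n17 (by rw [SimpleGraph.pathGraph_adj]; decide)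
  have k20 : G.Adj v2 v0 ↔ (SimpleGraph.pathGraph 8).Adj 2 0 := iff_of_false (fun h => n02 h.symm) (by rw [SimpleGraph.pathGraph_adj]; decide)
  have k21 : G.Adj v2 v1 ↔ (SimpleGraph.pathGraph 8).Adj 2 1 := iff_of_true a12.symm (by rw [SimpleGraph.pathGraph_adj]; decide)
  have k22 : G.Adj v2 v2 ↔ (SimpleGraph.pathGraph 8).Adj 2 2 := iff_of_false (G.loopless.irrefl _) (by rw [SimpleGraph.pathGraph_adj]; decide)
  have k23 : G.Adj v2 v3 ↔ (SimpleGraph.pathGraph 8).Adj 2 3 := iff_of_true a23 (by rw [SimpleGraph.pathGraph_adj]; decide)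
  have k24 : G.Adj v2 v4 ↔ (SimpleGraph.pathGraph 8).Adj 2 4 := iff_of_false n24 (by rw [SimpleGraph.pathGraph_adj]; decide)
  have k25 : G.Adj v2 v5 ↔ (SimpleGraph.pathGraph 8).Adj 2 5 := iff_of_false n25 (by rw [SimpleGraph.pathGraph_adj]; decide)
  have k26 : G.Adj v2 v6 ↔ (SimpleGraph.pathGraph 8).Adj 2 6 := iff_of_false n26 (by rw [SimpleGraph.pathGraph_adj]; decide)
  have k27 : G.Adj v2 v7 ↔ (SimpleGraph.pathGraph 8).Adj 2 7 := iff_of_false n27 (by rw [SimpleGraph.pathGraph_adj]; decide)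
  have k30 : G.Adj v3 v0 ↔ (SimpleGraph.pathGraph 8).Adj 3 0 := iff_of_false (fun h => n03 h.symm) (by rw [SimpleGraph.pathGraph_adj]; decide)
  have k31 : G.Adj v3 v1 ↔ (SimpleGraph.pathGraph 8).Adj 3 1 := iff_of_false (fun h => n13 h.symm) (by rw [SimpleGraph.pathGraph_adj]; decide)
  have k32 : G.Adj v3 v2 ↔ (SimpleGraph.pathGraph 8).Adj 3 2 := iff_of_true a23.symm (by rw [SimpleGraph.pathGraph_adj]; decide)
  have k33 : G.Adj v3 v3 ↔ (SimpleGraph.pathGraph 8).Adj 3 3 := iff_of_false (G.loopless.irrefl _) (by rw [SimpleGraph.pathGraph_adj]; decide)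
  have k34 : G.Adj v3 v4 ↔ (SimpleGraph.pathGraph 8).Adj 3 4 := iff_of_true a34 (by rw [SimpleGraph.pathGraph_adj]; decide)
  have k35 : G.Adj v3 v5 ↔ (SimpleGraph.pathGraph 8).Adj 3 5 := iff_of_false n35 (by rw [SimpleGraph.pathGraph_adj]; decide)
  have k36 : G.Adj v3 v6 ↔ (SimpleGraph.pathGraph 8).Adj 3 6 := iff_of_false n36 (by rw [SimpleGraph.pathGraph_adj]; decide)
  have k37 : G.Adj v3 v7 ↔ (SimpleGraph.pathGraph 8).Adj 3 7 := iff_of_false n37 (by rw [SimpleGraph.pathGraph_adj]; decide)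
  have k40 : G.Adj v4 v0 ↔ (SimpleGraph.pathGraph 8).Adj 4 0 := iff_of_false (fun h => n04 h.symm) (by rw [SimpleGraph.pathGraph_adj]; decide)
  have k41 : G.Adj v4 v1 ↔ (SimpleGraph.pathGraph 8).Adj 4 1 := iff_of_false (fun h => n14 h.symm) (by rw [SimpleGraph.pathGraph_adj]; decide)
  have k42 : G.Adj v4 v2 ↔ (SimpleGraph.pathGraph 8).Adj 4 2 := iff_of_false (fun h => n24 h.symm) (by rw [SimpleGraph.pathGraph_adj]; decide)
  have k43 : G.Adj v4 v3 ↔ (SimpleGraph.pathGraph 8).Adj 4 3 := iff_of_true a34.symm (by rw [SimpleGraph.pathGraph_adj]; decide)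
  have k44 : G.Adj v4 v4 ↔ (SimpleGraph.pathGraph 8).Adj 4 4 := iff_of_false (G.loopless.irrefl _) (by rw [SimpleGraph.pathGraph_adj]; decide)
  have k45 : G.Adj v4 v5 ↔ (SimpleGraph.pathGraph 8).Adj 4 5 := iff_of_true a45 (by rw [SimpleGraph.pathGraph_adj]; decide)
  have k46 : G.Adj v4 v6 ↔ (SimpleGraph.pathGraph 8).Adj 4 6 := iff_of_false n46 (by rw [SimpleGraph.pathGraph_adj]; decide)
  have k47 : G.Adj v4 v7 ↔ (SimpleGraph.pathGraph 8).Adj 4 7 := iff_of_false n47 (by rw [SimpleGraph.pathGraph_adj]; decide)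
  have k50 : G.Adj v5 v0 ↔ (SimpleGraph.pathGraph 8).Adj 5 0 := iff_of_false (fun h => n05 h.symm) (by rw [SimpleGraph.pathGraph_adj]; decide)
  have k51 : G.Adj v5 v1 ↔ (SimpleGraph.pathGraph 8).Adj 5 1 := iff_of_false (fun h => n15 h.symm) (by rw [SimpleGraph.pathGraph_adj]; decide)
  have k52 : G.Adj v5 v2 ↔ (SimpleGraph.pathGraph 8).Adj 5 2 := iff_of_false (fun h => n25 h.symm) (by rw [SimpleGraph.pathGraph_adj]; decide)
  have k53 : G.Adj v5 v3 ↔ (SimpleGraph.pathGraph 8).Adj 5 3 := iff_of_false (fun h => n35 h.symm) (by rw [SimpleGraph.pathGraph_adj]; decide)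
  have k54 : G.Adj v5 v4 ↔ (SimpleGraph.pathGraph 8).Adj 5 4 := iff_of_true a45.symm (by rw [SimpleGraph.pathGraph_adj]; decide)
  have k55 : G.Adj v5 v5 ↔ (SimpleGraph.pathGraph 8).Adj 5 5 := iff_of_false (G.loopless.irrefl _) (by rw [SimpleGraph.pathGraph_adj]; decide)
  have k56 : G.Adj v5 v6 ↔ (SimpleGraph.pathGraph 8).Adj 5 6 := iff_of_true a56 (by rw [SimpleGraph.pathGraph_adj]; decide)
  have k57 : G.Adj v5 v7 ↔ (SimpleGraph.pathGraph 8).Adj 5 7 := iff_of_false n57 (by rw [SimpleGraph.pathGraph_adj]; decide)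
  have k60 : G.Adj v6 v0 ↔ (SimpleGraph.pathGraph 8).Adj 6 0 := iff_of_false (fun h => n06 h.symm) (by rw [SimpleGraph.pathGraph_adj]; decide)
  have k61 : G.Adj v6 v1 ↔ (SimpleGraph.pathGraph 8).Adj 6 1 := iff_of_false (fun h => n16 h.symm) (by rw [SimpleGraph.pathGraph_adj]; decide)
  have k62 : G.Adj v6 v2 ↔ (SimpleGraph.pathGraph 8).Adj 6 2 := iff_of_false (fun h => n26 h.symm) (by rw [SimpleGraph.pathGraph_adj]; decide)
  have k63 : G.Adj v6 v3 ↔ (SimpleGraph.pathGraph 8).Adj 6 3 := iff_of_false (fun h => n36 h.symm) (by rw [SimpleGraph.pathGraph_adj]; decide)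
  have k64 : G.Adj v6 v4 ↔ (SimpleGraph.pathGraph 8).Adj 6 4 := iff_of_false (fun h => n46 h.symm) (by rw [SimpleGraph.pathGraph_adj]; decide)
  have k65 : G.Adj v6 v5 ↔ (SimpleGraph.pathGraph 8).Adj 6 5 := iff_of_true a56.symm (by rw [SimpleGraph.pathGraph_adj]; decide)
  have k66 : G.Adj v6 v6 ↔ (SimpleGraph.pathGraph 8).Adj 6 6 := iff_of_false (G.loopless.irrefl _) (by rw [SimpleGraph.pathGraph_adj]; decide)
  have k67 : G.Adj v6 v7 ↔ (SimpleGraph.pathGraph 8).Adj 6 7 := iff_of_true a67 (by rw [SimpleGraph.pathGraph_adj]; decide)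
  have k70 : G.Adj v7 v0 ↔ (SimpleGraph.pathGraph 8).Adj 7 0 := iff_of_false (fun h => n07 h.symm) (by rw [SimpleGraph.pathGraph_adj]; decide)
  have k71 : G.Adj v7 v1 ↔ (SimpleGraph.pathGraph 8).Adj 7 1 := iff_of_false (fun h => n17 h.symm) (by rw [SimpleGraph.pathGraph_adj]; decide)
  have k72 : G.Adj v7 v2 ↔ (SimpleGraph.pathGraph 8).Adj 7 2 := iff_of_false (fun h => n27 h.symm) (by rw [SimpleGraph.pathGraph_adj]; decide)
  have k73 : G.Adj v7 v3 ↔ (SimpleGraph.pathGraph 8).Adj 7 3 := iff_of_false (fun h => n37 h.symm) (by rw [SimpleGraph.pathGraph_adj]; decide)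
  have k74 : G.Adj v7 v4 ↔ (SimpleGraph.pathGraph 8).Adj 7 4 := iff_of_false (fun h => n47 h.symm) (by rw [SimpleGraph.pathGraph_adj]; decide)
  have k75 : G.Adj v7 v5 ↔ (SimpleGraph.pathGraph 8).Adj 7 5 := iff_of_false (fun h => n57 h.symm) (by rw [SimpleGraph.pathGraph_adj]; decide)
  have k76 : G.Adj v7 v6 ↔ (SimpleGraph.pathGraph 8).Adj 7 6 := iff_of_true a67.symm (by rw [SimpleGraph.pathGraph_adj]; decide)
  have k77 : G.Adj v7 v7 ↔ (SimpleGraph.pathGraph 8).Adj 7 7 := iff_of_false (G.loopless.irrefl _) (by rw [SimpleGraph.pathGraph_adj]; decide)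
  refine ⟨⟨⟨![v0,v1,v2,v3,v4,v5,v6,v7], ?_⟩, ?_⟩⟩
  · intro i j h
    fin_cases i <;> fin_cases j
    exacts [rfl, absurd h d01, absurd h d02, absurd h d03, absurd h d04, absurd h d05, absurd h d06, absurd h d07, absurd h d10, rfl, absurd h d12, absurd h d13, absurd h d14, absurd h d15, absurd h d16, absurd h d17, absurd h d20, absurd h d21, rfl, absurd h d23, absurd h d24, absurd h d25, absurd h d26, absurd h d27, absurd h d30, absurd h d31, absurd h d32, rfl, absurd h d34, absurd h d35, absurd h d36, absurd h d37, absurd h d40, absurd h d41, absurd h d42, absurd h d43, rfl, absurd h d45, absurd h d46, absurd h d47, absurd h d50, absurd h d51, absurd h d52, absurd h d53, absurd h d54, rfl, absurd h d56, absurd h d57, absurd h d60, absurd h d61, absurd h d62, absurd h d63, absurd h d64, absurd h d65, rfl, absurd h d67, absurd h d70, absurd h d71, absurd h d72, absurd h d73, absurd h d74, absurd h d75, absurd h d76, rfl]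
  · intro i j
    fin_cases i <;> fin_cases j
    exacts [k00, k01, k02, k03, k04, k05, k06, k07, k10, k11, k12, k13, k14, k15, k16, k17, k20, k21, k22, k23, k24, k25, k26, k27, k30, k31, k32, k33, k34, k35, k36, k37, k40, k41, k42, k43, k44, k45, k46, k47, k50, k51, k52, k53, k54, k55, k56, k57, k60, k61, k62, k63, k64, k65, k66, k67, k70, k71, k72, k73, k74, k75, k76, k77]

end STProof

namespace STProof
variable {V : Type*} {G : SimpleGraph V}

/-- The generic induced `P₈` for two distance-2 pairs joined by a 3-path with
chordless commons: p1 a1 e1 i1 i2 e2 a2 p2. -/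
lemma case1P8
    {p1 a1 e1 i1 i2 e2 a2 p2 : V}
    (e01 : G.Adj p1 a1) (e12 : G.Adj a1 e1) (e23 : G.Adj e1 i1)
    (e34 : G.Adj i1 i2) (e45 : G.Adj i2 e2) (e56 : G.Adj e2 a2) (e67 : G.Adj a2 p2)
    (hF1 : ¬ WithinTwo G p1 e2) (hF2 : ¬ WithinTwo G p1 p2)
    (hF3 : ¬ WithinTwo G e1 e2) (hF4 : ¬ WithinTwo G e1 p2)
    (hFa1e2 : ¬ WithinTwo G e2 a1) (hFa1p2 : ¬ WithinTwo G p2 a1)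
    (hFa2e1 : ¬ WithinTwo G e1 a2) (hFa2p1 : ¬ WithinTwo G p1 a2)
    (hCN1 : ∀ c, G.Adj e1 c → G.Adj c p1 → ¬ WithinTwo G e2 c)
    (hCN2 : ∀ c, G.Adj e2 c → G.Adj c p2 → ¬ WithinTwo G e1 c)
    (hnE1 : ¬ G.Adj e1 p1) (hnE2 : ¬ G.Adj e2 p2)
    (hna1i1 : ¬ G.Adj a1 i1) (hna2i2 : ¬ G.Adj a2 i2) :
    Nonempty (SimpleGraph.pathGraph 8 ↪g G) := by
  refine buildP8 p1 a1 e1 i1 i2 e2 a2 p2 e01 e12 e23 e34 e45 e56 e67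
    ?_ ?_ ?_ ?_ ?_ ?_ ?_ ?_ ?_ ?_ ?_ ?_ ?_ ?_ ?_ ?_ ?_ ?_ ?_ ?_ ?_
  · exact fun h => hnE1 h.symm
  · exact fun h => hCN1 i1 e23 h.symm (Or.inr ⟨i2, e45.symm, e34.symm⟩)
  · exact fun h => hF1 (Or.inr ⟨i2, h, e45⟩)
  · exact fun h => hF1 (Or.inl h)
  · exact fun h => hFa2p1 (Or.inl h)
  · exact fun h => hF2 (Or.inl h)
  · exact hna1i1
  · exact fun h => hFa1e2 (Or.inr ⟨i2, e45.symm, h.symm⟩)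
  · exact fun h => hFa1e2 (Or.inl h.symm)
  · exact fun h => hFa1e2 (Or.inr ⟨a2, e56, h.symm⟩)
  · exact fun h => hFa1p2 (Or.inl h.symm)
  · exact fun h => hF3 (Or.inr ⟨i2, h, e45⟩)
  · exact fun h => hF3 (Or.inl h)
  · exact fun h => hFa2e1 (Or.inl h)
  · exact fun h => hF4 (Or.inl h)
  · exact fun h => hF3 (Or.inr ⟨i1, e23, h⟩)
  · exact fun h => hFa2e1 (Or.inr ⟨i1, e23, h⟩)
  · exact fun h => hF4 (Or.inr ⟨i1, e23, h⟩)
  · exact fun h => hna2i2 h.symm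
  · exact fun h => hCN2 i2 e45.symm h (Or.inr ⟨i1, e23, e34⟩)
  · exact hnE2

end STProof

namespace STProof
namespace Ctx
variable {A : FGraph} (c : Ctx A)

/-- P8-D : x1 a1 y1 w1 u2 a2 y2 w2,  needs the chord a2-u2 and w1-u2. -/
lemma p8D {w1 w2 : A.V}
    (hw1 : A.G.Adj w1 c.y1) (hw1x : ¬ A.G.Adj w1 c.x1) (hw1a : ¬ A.G.Adj w1 c.a1)
    (hw2 : A.G.Adj w2 c.y2) (hw2a : ¬ A.G.Adj w2 c.a2) (hw2u : ¬ A.G.Adj w2 c.u2)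
    (hchord2 : A.G.Adj c.a2 c.u2) (hc4 : A.G.Adj w1 c.u2) (hc5 : ¬ A.G.Adj w1 w2) :
    Nonempty (SimpleGraph.pathGraph 8 ↪g A.G) := by
  refine buildP8 c.x1 c.a1 c.y1 w1 c.u2 c.a2 c.y2 w2
    c.hx1a1 c.ha1y1 hw1.symm hc4 hchord2.symm c.ha2y2 hw2.symm
    ?_ ?_ ?_ ?_ ?_ ?_ ?_ ?_ ?_ ?_ ?_ ?_ ?_ ?_ ?_ ?_ ?_ ?_ ?_ ?_ ?_
  · exact c.hn1
  · exact fun h => hw1x h.symm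
  · exact fun h => c.F_x1x2 (Or.inr ⟨c.u2, h, c.hu2x2⟩)
  · exact fun h => c.Fa2x1 (Or.inl h)
  · exact fun h => c.F_x1y2 (Or.inl h)
  · exact fun h => c.F_x1y2 (Or.inr ⟨w2, h, hw2⟩)
  · exact fun h => hw1a h.symm
  · exact fun h => c.Fa1x2 (Or.inr ⟨c.u2, c.hu2x2.symm, h.symm⟩)
  · exact fun h => c.Fa1y2 (Or.inr ⟨c.a2, c.ha2y2.symm, h.symm⟩)
  · exact fun h => c.Fa1y2 (Or.inl h.symm)
  · exact fun h => c.Fa1y2 (Or.inr ⟨w2, hw2.symm, h.symm⟩)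
  · exact fun h => c.F_y1x2 (Or.inr ⟨c.u2, h, c.hu2x2⟩)
  · exact fun h => c.Fa2y1 (Or.inl h)
  · exact fun h => c.F_y1y2 (Or.inl h)
  · exact fun h => c.F_y1y2 (Or.inr ⟨w2, h, hw2⟩)
  · exact fun h => c.Fa2y1 (Or.inr ⟨w1, hw1.symm, h⟩)
  · exact fun h => c.F_y1y2 (Or.inr ⟨w1, hw1.symm, h⟩)
  · exact hc5
  · exact fun h => c.nAdj_u2y2 h
  · exact hw2u |> fun hn => fun h => hn h.symm
  · exact fun h => hw2a h.symm

/-- P8-C : w1 y1 a1 u1 u2 a2 y2 w2, needs both chords. -/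
lemma p8C {w1 w2 : A.V}
    (hw1 : A.G.Adj w1 c.y1) (hw1x : ¬ A.G.Adj w1 c.x1) (hw1a : ¬ A.G.Adj w1 c.a1)
    (hw1u : ¬ A.G.Adj w1 c.u1)
    (hw2 : A.G.Adj w2 c.y2) (hw2x : ¬ A.G.Adj w2 c.x2) (hw2a : ¬ A.G.Adj w2 c.a2)
    (hw2u : ¬ A.G.Adj w2 c.u2)
    (hchord1 : A.G.Adj c.a1 c.u1) (hchord2 : A.G.Adj c.a2 c.u2)
    (hc4 : ¬ A.G.Adj w1 c.u2) (hc4' : ¬ A.G.Adj w2 c.u1) (hc5 : ¬ A.G.Adj w1 w2) :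
    Nonempty (SimpleGraph.pathGraph 8 ↪g A.G) := by
  refine buildP8 w1 c.y1 c.a1 c.u1 c.u2 c.a2 c.y2 w2
    hw1 c.ha1y1.symm hchord1 c.hu1u2 hchord2.symm c.ha2y2 hw2.symm
    ?_ ?_ ?_ ?_ ?_ ?_ ?_ ?_ ?_ ?_ ?_ ?_ ?_ ?_ ?_ ?_ ?_ ?_ ?_ ?_ ?_
  · exact fun h => hw1a h
  · exact fun h => hw1u h
  · exact hc4
  · exact fun h => c.Fa2y1 (Or.inr ⟨w1, hw1.symm, h⟩)
  · exact fun h => c.F_y1y2 (Or.inr ⟨w1, hw1.symm, h⟩)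
  · exact hc5
  · exact fun h => c.hCN1 c.u1 c.hx1u1 h.symm c.x2 c.hx2D c.hx2x1 c.hx2y1 c.hWx2u1
  · exact fun h => c.F_y1x2 (Or.inr ⟨c.u2, h, c.hu2x2⟩)
  · exact fun h => c.Fa2y1 (Or.inl h)
  · exact fun h => c.F_y1y2 (Or.inl h)
  · exact fun h => c.F_y1y2 (Or.inr ⟨w2, h, hw2⟩)
  · exact fun h => c.Fa1x2 (Or.inr ⟨c.u2, c.hu2x2.symm, h.symm⟩)
  · exact fun h => c.Fa1y2 (Or.inr ⟨c.a2, c.ha2y2.symm, h.symm⟩)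
  · exact fun h => c.Fa1y2 (Or.inl h.symm)
  · exact fun h => c.Fa1y2 (Or.inr ⟨w2, hw2.symm, h.symm⟩)
  · exact fun h => c.Fa2x1 (Or.inr ⟨c.u1, c.hx1u1, h⟩)
  · exact fun h => c.F_x1y2 (Or.inr ⟨c.u1, c.hx1u1, h⟩)
  · exact fun h => hc4' h.symm
  · exact fun h => c.nAdj_u2y2 h
  · exact fun h => hw2u h.symm
  · exact fun h => hw2a h.symm

/-- P8-A : w1 y1 a1 u1 u2 x2 a2 y2, needs chord a1-u1, good a2. -/
lemma p8A {w1 : A.V}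
    (hw1 : A.G.Adj w1 c.y1) (hw1x : ¬ A.G.Adj w1 c.x1) (hw1a : ¬ A.G.Adj w1 c.a1)
    (hw1u : ¬ A.G.Adj w1 c.u1)
    (hchord1 : A.G.Adj c.a1 c.u1) (hgood2 : ¬ A.G.Adj c.a2 c.u2)
    (hc4 : ¬ A.G.Adj w1 c.u2) :
    Nonempty (SimpleGraph.pathGraph 8 ↪g A.G) := by
  refine buildP8 w1 c.y1 c.a1 c.u1 c.u2 c.x2 c.a2 c.y2
    hw1 c.ha1y1.symm hchord1 c.hu1u2 c.hu2x2 c.hx2a2 c.ha2y2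
    ?_ ?_ ?_ ?_ ?_ ?_ ?_ ?_ ?_ ?_ ?_ ?_ ?_ ?_ ?_ ?_ ?_ ?_ ?_ ?_ ?_
  · exact fun h => hw1a h
  · exact fun h => hw1u h
  · exact hc4
  · exact fun h => c.F_y1x2 (Or.inr ⟨w1, hw1.symm, h⟩)
  · exact fun h => c.Fa2y1 (Or.inr ⟨w1, hw1.symm, h⟩)
  · exact fun h => c.F_y1y2 (Or.inr ⟨w1, hw1.symm, h⟩)
  · exact fun h => c.hCN1 c.u1 c.hx1u1 h.symm c.x2 c.hx2D c.hx2x1 c.hx2y1 c.hWx2u1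
  · exact fun h => c.F_y1x2 (Or.inr ⟨c.u2, h, c.hu2x2⟩)
  · exact fun h => c.F_y1x2 (Or.inl h)
  · exact fun h => c.Fa2y1 (Or.inl h)
  · exact fun h => c.F_y1y2 (Or.inl h)
  · exact fun h => c.Fa1x2 (Or.inr ⟨c.u2, c.hu2x2.symm, h.symm⟩)
  · exact fun h => c.Fa1x2 (Or.inl h.symm)
  · exact fun h => c.Fa1x2 (Or.inr ⟨c.a2, c.hx2a2, h.symm⟩)
  · exact fun h => c.Fa1y2 (Or.inl h.symm)
  · exact fun h => c.F_x1x2 (Or.inr ⟨c.u1, c.hx1u1, h⟩)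
  · exact fun h => c.Fa2x1 (Or.inr ⟨c.u1, c.hx1u1, h⟩)
  · exact fun h => c.F_x1y2 (Or.inr ⟨c.u1, c.hx1u1, h⟩)
  · exact fun h => hgood2 h.symm
  · exact fun h => c.nAdj_u2y2 h
  · exact c.hn2

/-- P8-B : y2 a2 x2 u2 w1 y1 a1 x1, needs w1-u2, good a2. -/
lemma p8B {w1 : A.V}
    (hw1 : A.G.Adj w1 c.y1) (hw1x : ¬ A.G.Adj w1 c.x1) (hw1a : ¬ A.G.Adj w1 c.a1)
    (hgood2 : ¬ A.G.Adj c.a2 c.u2) (hc4 : A.G.Adj w1 c.u2) :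
    Nonempty (SimpleGraph.pathGraph 8 ↪g A.G) := by
  refine buildP8 c.y2 c.a2 c.x2 c.u2 w1 c.y1 c.a1 c.x1
    c.ha2y2.symm c.hx2a2.symm c.hu2x2.symm hc4.symm hw1 c.ha1y1.symm c.hx1a1.symm
    ?_ ?_ ?_ ?_ ?_ ?_ ?_ ?_ ?_ ?_ ?_ ?_ ?_ ?_ ?_ ?_ ?_ ?_ ?_ ?_ ?_
  · exact fun h => c.hn2 h.symm
  · exact fun h => c.nAdj_u2y2 h.symm
  · exact fun h => c.F_y1y2 (Or.inr ⟨w1, hw1.symm, h.symm⟩)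
  · exact fun h => c.F_y1y2 (Or.inl h.symm)
  · exact fun h => c.Fa1y2 (Or.inl h)
  · exact fun h => c.F_x1y2 (Or.inl h.symm)
  · exact hgood2
  · exact fun h => c.Fa2y1 (Or.inr ⟨w1, hw1.symm, h.symm⟩)
  · exact fun h => c.Fa2y1 (Or.inl h.symm)
  · exact fun h => c.Fa1x2 (Or.inr ⟨c.a2, c.hx2a2, h⟩)
  · exact fun h => c.Fa2x1 (Or.inl h.symm)
  · exact fun h => c.F_y1x2 (Or.inr ⟨w1, hw1.symm, h.symm⟩)
  · exact fun h => c.F_y1x2 (Or.inl h.symm)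
  · exact fun h => c.Fa1x2 (Or.inl h)
  · exact fun h => c.F_x1x2 (Or.inl h.symm)
  · exact fun h => c.F_y1x2 (Or.inr ⟨c.u2, h.symm, c.hu2x2⟩)
  · exact fun h => c.Fa1x2 (Or.inr ⟨c.u2, c.hu2x2.symm, h⟩)
  · exact fun h => c.F_x1x2 (Or.inr ⟨c.u2, h.symm, c.hu2x2⟩)
  · exact fun h => hw1a h
  · exact fun h => hw1x h
  · exact fun h => c.hn1 h.symm

end Ctx
end STProof

namespace STProof
namespace Ctx
variable {A : FGraph} (c : Ctx A)

/-- Case 1: both sides have chordless commons: direct P8. -/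
lemma p8Case1 (g1 : ¬ A.G.Adj c.a1 c.u1) (g2 : ¬ A.G.Adj c.a2 c.u2) :
    Nonempty (SimpleGraph.pathGraph 8 ↪g A.G) :=
  case1P8 c.ha1y1.symm c.hx1a1.symm c.hx1u1 c.hu1u2 c.hu2x2 c.hx2a2 c.ha2y2
    c.F_y1x2 c.F_y1y2 c.F_x1x2 c.F_x1y2
    c.Fa1x2 c.Fa1y2 c.Fa2x1 c.Fa2y1
    (fun cc h1 h2 => c.hCN1 cc h1 h2 c.x2 c.hx2D c.hx2x1 c.hx2y1)
    (fun cc h1 h2 => c.hCN2 cc h1 h2 c.x1 c.hx1D (fun h => c.hx2x1 h.symm)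
      (fun h => c.hy2x1 h.symm))
    c.hn1 c.hn2 g1 g2

/-- If every neighbour of `y1` is adjacent to `x1`, `a1` or `u1`, we win. -/
lemma win31ctx (h3 : 3 ≤ A.stdn)
    (hcover : ∀ w, A.G.Adj w c.y1 → (A.G.Adj w c.x1 ∨ A.G.Adj w c.a1 ∨ A.G.Adj w c.u1)) :
    ctSTLe A 2 := by
  refine win31 A h3 c.hD c.hDcard c.hx1D c.hy1D c.hx2D
    (fun h => c.hy1x1 h.symm) c.hx2x1 c.hx2y1 c.ha1D c.hu1D
    (fun h => c.nAdj_u1y1 (h ▸ c.ha1y1)) c.hx1a1 c.ha1y1 c.hx1u1 c.hWx2u1 hcover ?_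
  exact fun r hr h1 h2 => (c.hFar1 r hr h1 h2).2

/-- Sub-tree: side 1 chorded, side 2 good. -/
lemma subtree (hfree : ¬ Nonempty (SimpleGraph.pathGraph 8 ↪g A.G)) (h3 : 3 ≤ A.stdn)
    (hchord1 : A.G.Adj c.a1 c.u1) (hgood2 : ¬ A.G.Adj c.a2 c.u2) :
    ctSTLe A 2 := by
  by_cases hW1 : ∃ w, A.G.Adj w c.y1 ∧ ¬ A.G.Adj w c.x1 ∧ ¬ A.G.Adj w c.a1 ∧
      ¬ A.G.Adj w c.u1
  · obtain ⟨w1, hw1, hw1x, hw1a, hw1u⟩ := hW1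
    by_cases hc4 : A.G.Adj w1 c.u2
    · exact (hfree (c.p8B hw1 hw1x hw1a hgood2 hc4)).elim
    · exact (hfree (c.p8A hw1 hw1x hw1a hw1u hchord1 hgood2 hc4)).elim
  · push_neg at hW1
    refine c.win31ctx h3 ?_
    intro w hw
    by_cases hwx : A.G.Adj w c.x1
    · exact Or.inl hwx
    · by_cases hwa : A.G.Adj w c.a1
      · exact Or.inr (Or.inl hwa)
      · exact Or.inr (Or.inr (hW1 w hw hwx hwa))

/-- Sub-tree: both sides chorded. -/
lemma subtree3 (hfree : ¬ Nonempty (SimpleGraph.pathGraph 8 ↪g A.G)) (h3 : 3 ≤ A.stdn)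
    (hchord1 : A.G.Adj c.a1 c.u1) (hchord2 : A.G.Adj c.a2 c.u2) :
    ctSTLe A 2 := by
  by_cases hW1 : ∃ w, A.G.Adj w c.y1 ∧ ¬ A.G.Adj w c.x1 ∧ ¬ A.G.Adj w c.a1 ∧
      ¬ A.G.Adj w c.u1
  swap
  · push_neg at hW1
    refine c.win31ctx h3 ?_
    intro w hw
    by_cases hwx : A.G.Adj w c.x1
    · exact Or.inl hwx
    · by_cases hwa : A.G.Adj w c.a1
      · exact Or.inr (Or.inl hwa)
      · exact Or.inr (Or.inr (hW1 w hw hwx hwa))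
  by_cases hW2 : ∃ w, A.G.Adj w c.y2 ∧ ¬ A.G.Adj w c.x2 ∧ ¬ A.G.Adj w c.a2 ∧
      ¬ A.G.Adj w c.u2
  swap
  · push_neg at hW2
    refine c.flip.win31ctx h3 ?_
    intro w hw
    by_cases hwx : A.G.Adj w c.x2
    · exact Or.inl hwx
    · by_cases hwa : A.G.Adj w c.a2
      · exact Or.inr (Or.inl hwa)
      · exact Or.inr (Or.inr (hW2 w hw hwx hwa))
  obtain ⟨w1, hw1, hw1x, hw1a, hw1u⟩ := hW1
  obtain ⟨w2, hw2, hw2x, hw2a, hw2u⟩ := hW2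
  by_cases hc5 : A.G.Adj w1 w2
  · refine (hfree (case1P8 c.hx1a1 c.ha1y1 hw1.symm hc5 hw2 c.ha2y2.symm c.hx2a2.symm
      c.F_x1y2 c.F_x1x2 c.F_y1y2 c.F_y1x2
      c.Fa1y2 c.Fa1x2 c.Fa2y1 c.Fa2x1
      (fun cc h1 h2 => c.hCN1 cc h2.symm h1.symm c.y2 c.hy2D c.hy2x1 c.hy2y1)
      (fun cc h1 h2 => c.hCN2 cc h2.symm h1.symm c.y1 c.hy1D (fun h => c.hx2y1 h.symm)
        (fun h => c.hy2y1 h.symm))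
      (fun h => c.hn1 h.symm) (fun h => c.hn2 h.symm)
      (fun h => hw1a h.symm) (fun h => hw2a h.symm))).elim
  by_cases hc4 : A.G.Adj w1 c.u2
  · exact (hfree (c.p8D hw1 hw1x hw1a hw2 hw2a hw2u hchord2 hc4 hc5)).elim
  by_cases hc4' : A.G.Adj w2 c.u1
  · exact (hfree (c.flip.p8D hw2 hw2x hw2a hw1 hw1a hw1u hchord1 hc4'
      (fun h => hc5 h.symm))).elim
  · exact (hfree (c.p8C hw1 hw1x hw1a hw1u hw2 hw2x hw2a hw2u hchord1 hchord2
      hc4 hc4' hc5)).elim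

end Ctx
end STProof

namespace STProof
variable {V : Type*} {G : SimpleGraph V}

lemma walk_le_two {u v : V} (w : G.Walk u v) (h : w.length ≤ 2) :
    u = v ∨ WithinTwo G u v := by
  cases w with
  | nil => exact Or.inl rfl
  | cons h1 w' =>
    cases w' with
    | nil => exact Or.inr (Or.inl h1)
    | cons h2 w'' =>
      cases w'' with
      | nil => exact Or.inr (Or.inr ⟨_, h1, h2⟩)
      | cons h3 w3 => simp [SimpleGraph.Walk.length_cons] at h

lemma length_drop {u v : V} (w : G.Walk u v) (n : ℕ) :
    (w.drop n).length = w.length - n := by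
  induction w generalizing n with
  | nil => simp [SimpleGraph.Walk.drop]
  | cons h w ih =>
    cases n with
    | zero => simp [SimpleGraph.Walk.drop]
    | succ n => simpa [SimpleGraph.Walk.drop] using ih n

lemma w2_of_dist {x y : V} (hr : G.Reachable x y) (hne : x ≠ y) (h : G.dist x y ≤ 2) :
    WithinTwo G x y := by
  obtain ⟨p, hp⟩ := hr.exists_walk_length_eq_dist
  rcases walk_le_two p (by omega) with h' | h'
  · exact absurd h' hne
  · exact h'

lemma mainCore (A : FGraph) (hfree : ¬ Nonempty (SimpleGraph.pathGraph 8 ↪g A.G))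
    (hc : A.G.Connected) (h3 : 3 ≤ A.stdn) (hct : ¬ ctSTLe A 2)
    {D : Set A.V} (hD : IsSemitotalDomSet A.G D) (hDcard : D.ncard = A.stdn)
    {x1 y1 z0 : A.V} {k : ℕ}
    (hx1 : x1 ∈ D) (hy1 : y1 ∈ D) (hne : y1 ≠ x1) (hW : WithinTwo A.G x1 y1)
    (hz0 : z0 ∈ D) (hz0x : z0 ≠ x1) (hz0y : z0 ≠ y1)
    (hdist : A.G.dist x1 z0 = k)
    (hmin : ∀ z ∈ D, z ≠ x1 → z ≠ y1 → k ≤ A.G.dist x1 z ∧ k ≤ A.G.dist y1 z) :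
    False := by
  classical
  have factA : ∀ p q r : A.V, p ∈ D → q ∈ D → r ∈ D → p ≠ q → WithinTwo A.G p q →
      r ≠ p → r ≠ q → ¬ WithinTwo A.G r p :=
    fun p q r hp hq hr hpq hWpq hrp hrq hWrp =>
      hct (winA A h3 hD hDcard hp hq hr hpq hWpq hrp hrq hWrp)
  have factB : ∀ p q cc r : A.V, p ∈ D → q ∈ D → r ∈ D → p ≠ q → WithinTwo A.G p q →
      A.G.Adj p cc → A.G.Adj cc q → r ≠ p → r ≠ q → ¬ WithinTwo A.G r cc :=
    fun p q cc r hp hq hr hpq hWpq h1 h2 hrp hrq hWrc =>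
      hct (winB A h3 hD hDcard hp hq hr hpq hWpq h1 h2 hrp hrq hWrc)
  have hk3 : 3 ≤ k := by
    by_contra h
    push_neg at h
    have hd2 : A.G.dist x1 z0 ≤ 2 := by omega
    have hw : WithinTwo A.G x1 z0 := w2_of_dist (hc.preconnected x1 z0) (Ne.symm hz0x) hd2
    exact factA x1 y1 z0 hx1 hy1 hz0 (Ne.symm hne) hW hz0x hz0y (W2.symm hw)
  -- first walk to locate a vertex at distance exactly 3
  obtain ⟨p, hp⟩ := (hc.preconnected x1 z0).exists_walk_length_eq_dist
  have hplen : p.length = k := by rw [hp, hdist]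
  have ha01 : A.G.Adj x1 (p.getVert 1) := by
    have h := p.adj_getVert_succ (i := 0) (by omega)
    rwa [p.getVert_zero] at h
  have ha12 : A.G.Adj (p.getVert 1) (p.getVert 2) := p.adj_getVert_succ (by omega)
  have hd_u2_le : A.G.dist x1 (p.getVert 2) ≤ 2 := by
    have := SimpleGraph.dist_le (SimpleGraph.Walk.cons ha01
      (SimpleGraph.Walk.cons ha12 SimpleGraph.Walk.nil))
    simpa using this
  have hdrop : A.G.dist (p.getVert 2) z0 ≤ k - 2 := by
    have := SimpleGraph.dist_le (p.drop 2)
    rwa [length_drop, hplen] at this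
  have htri : A.G.dist x1 z0 ≤ A.G.dist x1 (p.getVert 2) + A.G.dist (p.getVert 2) z0 :=
    hc.dist_triangle
  have hd_u2_ge : 2 ≤ A.G.dist x1 (p.getVert 2) := by omega
  have hu2x1 : p.getVert 2 ≠ x1 := by
    intro h
    rw [h, SimpleGraph.dist_self] at hd_u2_ge
    omega
  have hu2'D : p.getVert 2 ∉ D := by
    intro hin
    by_cases h : p.getVert 2 = y1
    · have h1 := (hmin z0 hz0 hz0x hz0y).2
      rw [← h] at h1
      omega
    · have h1 := (hmin _ hin hu2x1 h).1
      omega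
  obtain ⟨dl, hdlD, hdladj⟩ := hD.1 _ hu2'D
  have hdlx1 : dl ≠ x1 := by
    intro h
    have h1 : A.G.dist x1 (p.getVert 2) ≤ 1 := by
      have := SimpleGraph.dist_le (SimpleGraph.Walk.cons (h ▸ hdladj) SimpleGraph.Walk.nil)
      simpa using this
    omega
  have hdly1 : dl ≠ y1 := by
    intro h
    have h1 : A.G.dist y1 (p.getVert 2) ≤ 1 := by
      have := SimpleGraph.dist_le (SimpleGraph.Walk.cons (h ▸ hdladj) SimpleGraph.Walk.nil)
      simpa using this
    have h2 : A.G.dist y1 z0 ≤ A.G.dist y1 (p.getVert 2) + A.G.dist (p.getVert 2) z0 :=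
      hc.dist_triangle
    have h3 := (hmin z0 hz0 hz0x hz0y).2
    omega
  have hdl_ge := (hmin dl hdlD hdlx1 hdly1).1
  have hdl_le : A.G.dist x1 dl ≤ 3 := by
    have h1 : A.G.dist (p.getVert 2) dl ≤ 1 := by
      have := SimpleGraph.dist_le (SimpleGraph.Walk.cons hdladj.symm SimpleGraph.Walk.nil)
      simpa using this
    have h2 : A.G.dist x1 dl ≤ A.G.dist x1 (p.getVert 2) + A.G.dist (p.getVert 2) dl :=
      hc.dist_triangle
    omega
  have hk_eq : k = 3 := by omega
  have hdist3 : A.G.dist x1 dl = 3 := by omega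
  -- second walk: the actual path x1 u1 u2 dl
  obtain ⟨q, hq⟩ := (hc.preconnected x1 dl).exists_walk_length_eq_dist
  have hqlen : q.length = 3 := by rw [hq, hdist3]
  have b01 : A.G.Adj x1 (q.getVert 1) := by
    have h := q.adj_getVert_succ (i := 0) (by omega)
    rwa [q.getVert_zero] at h
  have b12 : A.G.Adj (q.getVert 1) (q.getVert 2) := q.adj_getVert_succ (by omega)
  have b23 : A.G.Adj (q.getVert 2) dl := by
    have h := q.adj_getVert_succ (i := 2) (by omega)
    have h2 : q.getVert 3 = dl := by
      rw [← hqlen]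
      exact q.getVert_length
    rwa [h2] at h
  set u1 := q.getVert 1 with hu1def
  set u2 := q.getVert 2 with hu2def
  have hdx1u2_le : A.G.dist x1 u2 ≤ 2 := by
    have := SimpleGraph.dist_le (SimpleGraph.Walk.cons b01
      (SimpleGraph.Walk.cons b12 SimpleGraph.Walk.nil))
    simpa using this
  have hdu2dl : A.G.dist u2 dl ≤ 1 := by
    have := SimpleGraph.dist_le (SimpleGraph.Walk.cons b23 SimpleGraph.Walk.nil)
    simpa using this
  have hdx1u2_ge : 2 ≤ A.G.dist x1 u2 := by
    have h2 : A.G.dist x1 dl ≤ A.G.dist x1 u2 + A.G.dist u2 dl := hc.dist_triangle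
    omega
  have hu2nx1 : u2 ≠ x1 := by
    intro h
    rw [h, SimpleGraph.dist_self] at hdx1u2_ge
    omega
  have hu2D : u2 ∉ D := by
    intro hin
    by_cases h : u2 = y1
    · have h1 : A.G.dist y1 dl ≤ 1 := by
        have := SimpleGraph.dist_le (SimpleGraph.Walk.cons (h ▸ b23) SimpleGraph.Walk.nil)
        simpa using this
      have := (hmin dl hdlD hdlx1 hdly1).2
      omega
    · have := (hmin u2 hin hu2nx1 h).1
      omega
  have hu1nx1 : u1 ≠ x1 := b01.ne'
  have hu1D : u1 ∉ D := by
    intro hin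
    by_cases h : u1 = y1
    · have h1 : A.G.dist y1 dl ≤ 2 := by
        have := SimpleGraph.dist_le (SimpleGraph.Walk.cons (h ▸ b12)
          (SimpleGraph.Walk.cons b23 SimpleGraph.Walk.nil))
        simpa using this
      have := (hmin dl hdlD hdlx1 hdly1).2
      omega
    · have h1 : A.G.dist x1 u1 ≤ 1 := by
        have := SimpleGraph.dist_le (SimpleGraph.Walk.cons b01 SimpleGraph.Walk.nil)
        simpa using this
      have := (hmin u1 hin hu1nx1 h).1
      omega
  have hWx1u2' : WithinTwo A.G x1 u2 := Or.inr ⟨u1, b01, b12⟩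
  have hWdlu1 : WithinTwo A.G dl u1 := Or.inr ⟨u2, b23.symm, b12.symm⟩
  have hnadj1 : ¬ A.G.Adj x1 y1 := fun hadj =>
    hct (winAdjPair A h3 hD hDcard hx1 hy1 hadj hu1D b01.symm hdlD hdlx1 hdly1
      (fun h => hu1D (h ▸ hdlD)) hWdlu1)
  obtain ⟨a1, ha1x, ha1y⟩ : ∃ a, A.G.Adj x1 a ∧ A.G.Adj a y1 := by
    rcases hW with h | ⟨a, h1, h2⟩
    · exact absurd h hnadj1
    · exact ⟨a, h1, h2⟩
  have commonNotD1 : ∀ a, A.G.Adj x1 a → A.G.Adj a y1 → a ∉ D := by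
    intro a h1 h2 hin
    exact factA x1 a y1 hx1 hin hy1 h1.ne (Or.inl h1) hne h2.ne' (W2.symm hW)
  obtain ⟨y2, hy2D, hy2dl, hWdly2⟩ := hD.2 dl hdlD
  have hy2x1 : y2 ≠ x1 := by
    intro h
    exact factA x1 y1 dl hx1 hy1 hdlD (Ne.symm hne) hW hdlx1 hdly1 (h ▸ hWdly2)
  have hy2y1 : y2 ≠ y1 := by
    intro h
    exact factA y1 x1 dl hy1 hx1 hdlD hne (W2.symm hW) hdly1 hdlx1 (h ▸ hWdly2)
  have hnadj2 : ¬ A.G.Adj dl y2 := fun hadj =>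
    hct (winAdjPair A h3 hD hDcard hdlD hy2D hadj hu2D b23 hx1
      (Ne.symm hdlx1) (Ne.symm hy2x1) (Ne.symm hu2nx1) hWx1u2')
  obtain ⟨a2, ha2x, ha2y⟩ : ∃ a, A.G.Adj dl a ∧ A.G.Adj a y2 := by
    rcases hWdly2 with h | ⟨a, h1, h2⟩
    · exact absurd h hnadj2
    · exact ⟨a, h1, h2⟩
  have commonNotD2 : ∀ a, A.G.Adj dl a → A.G.Adj a y2 → a ∉ D := by
    intro a h1 h2 hin
    exact factA dl a y2 hdlD hin hy2D h1.ne (Or.inl h1) hy2dl h2.ne'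
      (W2.symm hWdly2)
  have hFar1 : ∀ r ∈ D, r ≠ x1 → r ≠ y1 →
      ¬ WithinTwo A.G r x1 ∧ ¬ WithinTwo A.G r y1 := by
    intro r hr h1 h2
    exact ⟨factA x1 y1 r hx1 hy1 hr (Ne.symm hne) hW h1 h2,
      factA y1 x1 r hy1 hx1 hr hne (W2.symm hW) h2 h1⟩
  have hFar2 : ∀ r ∈ D, r ≠ dl → r ≠ y2 →
      ¬ WithinTwo A.G r dl ∧ ¬ WithinTwo A.G r y2 := by
    intro r hr h1 h2
    exact ⟨factA dl y2 r hdlD hy2D hr (Ne.symm hy2dl) hWdly2 h1 h2,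
      factA y2 dl r hy2D hdlD hr hy2dl (W2.symm hWdly2) h2 h1⟩
  have hCN1 : ∀ cc, A.G.Adj x1 cc → A.G.Adj cc y1 → ∀ r ∈ D, r ≠ x1 → r ≠ y1 →
      ¬ WithinTwo A.G r cc :=
    fun cc h1 h2 r hr hr1 hr2 =>
      factB x1 y1 cc r hx1 hy1 hr (Ne.symm hne) hW h1 h2 hr1 hr2
  have hCN2 : ∀ cc, A.G.Adj dl cc → A.G.Adj cc y2 → ∀ r ∈ D, r ≠ dl → r ≠ y2 →
      ¬ WithinTwo A.G r cc :=
    fun cc h1 h2 r hr hr1 hr2 =>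
      factB dl y2 cc r hdlD hy2D hr (Ne.symm hy2dl) hWdly2 h1 h2 hr1 hr2
  -- context builder
  let mkc : ∀ (aa1 aa2 : A.V), A.G.Adj x1 aa1 → A.G.Adj aa1 y1 →
      A.G.Adj dl aa2 → A.G.Adj aa2 y2 → Ctx A := fun aa1 aa2 m1 m2 m3 m4 =>
    { D := D, hD := hD, hDcard := hDcard,
      x1 := x1, y1 := y1, a1 := aa1, u1 := u1, u2 := u2, x2 := dl, y2 := y2, a2 := aa2,
      hx1D := hx1, hy1D := hy1, hx2D := hdlD, hy2D := hy2D,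
      ha1D := commonNotD1 _ m1 m2, hu1D := hu1D, hu2D := hu2D,
      ha2D := commonNotD2 _ m3 m4,
      hy1x1 := hne, hy2x2 := hy2dl, hx2x1 := hdlx1, hx2y1 := hdly1,
      hy2x1 := hy2x1, hy2y1 := hy2y1,
      hx1a1 := m1, ha1y1 := m2, hx1u1 := b01, hu1u2 := b12, hu2x2 := b23,
      hx2a2 := m3, ha2y2 := m4,
      hn1 := hnadj1, hn2 := hnadj2,
      hFar1 := hFar1, hFar2 := hFar2, hCN1 := hCN1, hCN2 := hCN2 }
  by_cases hQ1 : ∃ a, A.G.Adj x1 a ∧ A.G.Adj a y1 ∧ ¬ A.G.Adj a u1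
  · obtain ⟨a1', k1, k2, k3⟩ := hQ1
    by_cases hQ2 : ∃ b, A.G.Adj dl b ∧ A.G.Adj b y2 ∧ ¬ A.G.Adj b u2
    · obtain ⟨a2', l1, l2, l3⟩ := hQ2
      exact hfree ((mkc a1' a2' k1 k2 l1 l2).p8Case1 k3 l3)
    · push_neg at hQ2
      have chord2 : A.G.Adj a2 u2 := hQ2 a2 ha2x ha2y
      exact hct ((mkc a1' a2 k1 k2 ha2x ha2y).flip.subtree hfree h3 chord2 k3)
  · push_neg at hQ1
    have chord1 : A.G.Adj a1 u1 := hQ1 a1 ha1x ha1y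
    by_cases hQ2 : ∃ b, A.G.Adj dl b ∧ A.G.Adj b y2 ∧ ¬ A.G.Adj b u2
    · obtain ⟨a2', l1, l2, l3⟩ := hQ2
      exact hct ((mkc a1 a2' ha1x ha1y l1 l2).subtree hfree h3 chord1 l3)
    · push_neg at hQ2
      have chord2 : A.G.Adj a2 u2 := hQ2 a2 ha2x ha2y
      exact hct ((mkc a1 a2 ha1x ha1y ha2x ha2y).subtree3 hfree h3 chord1 chord2)

end STProof

namespace STProof

theorem stmt5' (A : FGraph) (hfree : ¬ Nonempty (SimpleGraph.pathGraph 8 ↪g A.G))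
    (hc : A.G.Connected) (h3 : 3 ≤ A.stdn) :
    ctSTLe A 2 := by
  classical
  by_contra hct
  have hV2 : ∃ v w : A.V, v ≠ w := by
    by_contra h
    push_neg at h
    have hempty : {n | ∃ D : Set A.V, IsSemitotalDomSet A.G D ∧ D.ncard = n} = ∅ := by
      ext n
      simp only [Set.mem_setOf_eq, Set.mem_empty_iff_false, iff_false]
      rintro ⟨D, hD, rfl⟩
      obtain ⟨v⟩ := hc.nonempty
      by_cases hv : v ∈ D
      · obtain ⟨w, hw, hwne, -⟩ := hD.2 v hv
        exact hwne (h w v)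
      · obtain ⟨u, hu, hadj⟩ := hD.1 v hv
        exact hadj.ne (h u v)
    have h0 : A.stdn = 0 := by
      show semitotalDomNum A.G = 0
      unfold semitotalDomNum
      rw [hempty]
      exact Nat.sInf_empty
    omega
  have huniv : IsSemitotalDomSet A.G (Set.univ : Set A.V) := by
    constructor
    · intro v hv
      exact absurd (Set.mem_univ v) hv
    · intro x _
      obtain ⟨v, w, hvw⟩ := hV2
      obtain ⟨t, htx⟩ : ∃ t, t ≠ x := by
        by_cases h : v = x
        · exact ⟨w, fun hw => hvw (h.trans hw.symm)⟩
        · exact ⟨v, h⟩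
      obtain ⟨pw⟩ := hc.preconnected x t
      cases pw with
      | nil => exact absurd rfl htx
      | cons hadj pw' => exact ⟨_, Set.mem_univ _, hadj.ne', Or.inl hadj⟩
  obtain ⟨D, hD, hDcard⟩ := exists_min_sds (G := A.G) ⟨Set.univ, huniv⟩
  have hDcard' : D.ncard = A.stdn := hDcard
  have hD3 : 3 ≤ D.ncard := by rw [hDcard']; exact h3
  have hDne : D.Nonempty := by
    apply Set.nonempty_of_ncard_ne_zero
    omega
  obtain ⟨x0, hx0⟩ := hDne
  obtain ⟨y0, hy0D, hy0ne, hWxy⟩ := hD.2 x0 hx0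
  have hthird : ∃ z ∈ D, z ≠ x0 ∧ z ≠ y0 := by
    by_contra h
    push_neg at h
    have hsub : D ⊆ {x0, y0} := by
      intro z hz
      by_cases h1 : z = x0
      · exact Or.inl h1
      · exact Or.inr (h z hz h1)
    have hle := Set.ncard_le_ncard hsub (Set.toFinite _)
    have h2 : ({x0, y0} : Set A.V).ncard ≤ 2 := by
      refine (Set.ncard_insert_le _ _).trans ?_
      simp [Set.ncard_singleton]
    omega
  obtain ⟨z1, hz1D, hz1x, hz1y⟩ := hthird
  have hKne : {n | ∃ z ∈ D, z ≠ x0 ∧ z ≠ y0 ∧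
      (A.G.dist x0 z = n ∨ A.G.dist y0 z = n)}.Nonempty :=
    ⟨_, z1, hz1D, hz1x, hz1y, Or.inl rfl⟩
  obtain ⟨z0, hz0D, hz0x, hz0y, hz0disj⟩ := Nat.sInf_mem hKne
  have hminK : ∀ z ∈ D, z ≠ x0 → z ≠ y0 →
      sInf {n | ∃ z ∈ D, z ≠ x0 ∧ z ≠ y0 ∧
        (A.G.dist x0 z = n ∨ A.G.dist y0 z = n)} ≤ A.G.dist x0 z ∧
      sInf {n | ∃ z ∈ D, z ≠ x0 ∧ z ≠ y0 ∧
        (A.G.dist x0 z = n ∨ A.G.dist y0 z = n)} ≤ A.G.dist y0 z := by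
    intro z hz h1 h2
    exact ⟨Nat.sInf_le ⟨z, hz, h1, h2, Or.inl rfl⟩,
      Nat.sInf_le ⟨z, hz, h1, h2, Or.inr rfl⟩⟩
  rcases hz0disj with he | he
  · exact mainCore A hfree hc h3 hct hD hDcard' hx0 hy0D hy0ne hWxy
      hz0D hz0x hz0y he hminK
  · exact mainCore A hfree hc h3 hct hD hDcard' hy0D hx0 (Ne.symm hy0ne)
      (W2.symm hWxy) hz0D hz0y hz0x he
      (fun z hz h1 h2 => ⟨(hminK z hz h2 h1).2, (hminK z hz h2 h1).1⟩)

end STProof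


/-- Every `P₈`-free connected graph with `γ_{t2} ≥ 3` satisfies `ct_{γ_{t2}} ≤ 2`. -/
theorem stmt5 (A : FGraph) (hfree : ¬ Nonempty (SimpleGraph.pathGraph 8 ↪g A.G))
    (hc : A.G.Connected) (h3 : 3 ≤ A.stdn) :
    ctSTLe A 2 := by
  exact STProof.stmt5' A hfree hc h3
end
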